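/- arXiv:1707.01693 — 8 statements merged into one kernel-verified Lean document; each statement's English description precedes it below -/
import Mathlib

section
/- Let λ₁, λ₂, λ₃ be nonzero complex numbers with λ₁ ≠ λ₂, and let a, b, c, d, σ ∈ ℂ with b ≠ 0 and c ≠ 0. Set A = [[a, b, 1],[c, d, 1],[0, 0, σ]] and B = diag(λ₁, λ₂, λ₃), and suppose A² = I and (AB)³ = I. Then σ² = 1, λ₃³ = σ, d = −a, b = −a − σ, c = a − σ, a = 1/(λ₁λ₂(λ₁ − λ₂)), and λ₃² = −λ₁λ₂. -/
noncomputable section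
open Matrix

/-- For the pair `A = [[a,b,1],[c,d,1],[0,0,σ]]`, `B = diag(λ₁,λ₂,λ₃)` with
`λᵢ ≠ 0`, `λ₁ ≠ λ₂`, `b ≠ 0`, `c ≠ 0`, satisfying `A² = I` and `(AB)³ = I`, we have
`σ² = 1`, `λ₃³ = σ`, `d = −a`, `b = −a − σ`, `c = a − σ`, `a = 1/(λ₁λ₂(λ₁ − λ₂))`,
and `λ₃² = −λ₁λ₂`. -/
theorem stmt_1 (l1 l2 l3 a b c d σ : ℂ)
    (hl1 : l1 ≠ 0) (hl2 : l2 ≠ 0) (hl3 : l3 ≠ 0) (hne : l1 ≠ l2)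
    (hb : b ≠ 0) (hc : c ≠ 0)
    (A : Matrix (Fin 3) (Fin 3) ℂ) (hA : A = !![a, b, 1; c, d, 1; 0, 0, σ])
    (B : Matrix (Fin 3) (Fin 3) ℂ) (hB : B = Matrix.diagonal ![l1, l2, l3])
    (hA2 : A ^ 2 = 1) (hAB3 : (A * B) ^ 3 = 1) :
    σ ^ 2 = 1 ∧ l3 ^ 3 = σ ∧ d = -a ∧ b = -a - σ ∧ c = a - σ ∧
      a = 1 / (l1 * l2 * (l1 - l2)) ∧ l3 ^ 2 = -(l1 * l2) := by
  subst hA hB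
  have e01 : (!![a, b, 1; c, d, 1; 0, 0, σ] ^ 2) 0 1 = (1 : Matrix (Fin 3) (Fin 3) ℂ) 0 1 := by rw [hA2]
  have e02 : (!![a, b, 1; c, d, 1; 0, 0, σ] ^ 2) 0 2 = (1 : Matrix (Fin 3) (Fin 3) ℂ) 0 2 := by rw [hA2]
  have e12 : (!![a, b, 1; c, d, 1; 0, 0, σ] ^ 2) 1 2 = (1 : Matrix (Fin 3) (Fin 3) ℂ) 1 2 := by rw [hA2]
  have e22 : (!![a, b, 1; c, d, 1; 0, 0, σ] ^ 2) 2 2 = (1 : Matrix (Fin 3) (Fin 3) ℂ) 2 2 := by rw [hA2]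
  simp [pow_succ, Matrix.mul_apply, Fin.sum_univ_three, Matrix.one_apply] at e01 e02 e12 e22
  have hM : !![a, b, 1; c, d, 1; 0, 0, σ] * Matrix.diagonal ![l1, l2, l3]
      = !![a*l1, b*l2, l3; c*l1, d*l2, l3; 0, 0, σ*l3] := by
    ext i j
    fin_cases i <;> fin_cases j <;>
      simp [Matrix.mul_apply, Fin.sum_univ_three, Matrix.diagonal_apply]
  rw [hM] at hAB3
  set M := !![a*l1, b*l2, l3; c*l1, d*l2, l3; 0, 0, σ*l3] with hMd
  have f00 : (M ^ 3) 0 0 = (1 : Matrix (Fin 3) (Fin 3) ℂ) 0 0 := by rw [hAB3]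
  have f01 : (M ^ 3) 0 1 = (1 : Matrix (Fin 3) (Fin 3) ℂ) 0 1 := by rw [hAB3]
  have f02 : (M ^ 3) 0 2 = (1 : Matrix (Fin 3) (Fin 3) ℂ) 0 2 := by rw [hAB3]
  have f12 : (M ^ 3) 1 2 = (1 : Matrix (Fin 3) (Fin 3) ℂ) 1 2 := by rw [hAB3]
  have f22 : (M ^ 3) 2 2 = (1 : Matrix (Fin 3) (Fin 3) ℂ) 2 2 := by rw [hAB3]
  simp [hMd, pow_succ, Matrix.mul_apply, Fin.sum_univ_three, Matrix.one_apply]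
    at f00 f01 f02 f12 f22
  have hσ2 : σ ^ 2 = 1 := by linear_combination e22
  have hσ : σ ≠ 0 := by
    intro h; rw [h] at hσ2; norm_num at hσ2
  have hd : d = -a := mul_left_cancel₀ hb (show b * d = b * (-a) by linear_combination e01)
  have hbv : b = -a - σ := by linear_combination e02
  have hcv : c = a - σ := by linear_combination e12 - hd
  subst hd hbv hcv
  have hP1 : a ^ 2 * (l1 - l2) ^ 2 + l1 * l2 = 0 :=
    mul_left_cancel₀ (mul_ne_zero hb hl2)
      (show (-a - σ) * l2 * (a ^ 2 * (l1 - l2) ^ 2 + l1 * l2) = (-a - σ) * l2 * 0 by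
        linear_combination f01 - (-a - σ) * l1 * l2 ^ 2 * hσ2)
  have ha' : a * (l1 - l2) * (l1 * l2) = 1 := by
    linear_combination f00 - a * l1 * hP1 - (a * l1 ^ 2 * l2 + a * (l1 - l2) * l1 * l2) * hσ2
  have hl1l2 : l1 * l2 * (l1 - l2) ≠ 0 :=
    mul_ne_zero (mul_ne_zero hl1 hl2) (sub_ne_zero.2 hne)
  have ha : a = 1 / (l1 * l2 * (l1 - l2)) := by
    field_simp
    linear_combination ha'
  have hts : a * (l1 - l2) + σ * l3 = 0 :=
    mul_left_cancel₀ (mul_ne_zero hσ (mul_ne_zero (sub_ne_zero.2 hne) hl3))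
      (show σ * ((l1 - l2) * l3) * (a * (l1 - l2) + σ * l3) = σ * ((l1 - l2) * l3) * 0 by
        linear_combination f02 - f12)
  have hl32 : l3 ^ 2 = -(l1 * l2) :=
    mul_left_cancel₀ hl3
      (show l3 * l3 ^ 2 = l3 * -(l1 * l2) by
        linear_combination f02 - (a * l1 + (-a - σ) * l2) * l3 * hts - (l3 ^ 3 + l1 * l2 * l3) * hσ2)
  have hl33 : l3 ^ 3 = σ := by
    linear_combination σ * f22 - l3 ^ 3 * (σ ^ 2 + 1) * hσ2
  exact ⟨hσ2, hl33, by ring, by ring, by ring, ha, hl32⟩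
end
end

section
/- Let A₀ = [[a, b],[c, d]] ∈ GL₂(ℂ) and B₀ = diag(λ₁, −λ₁) satisfy A₀² = I, (A₀B₀)³ = I and b·c ≠ 0 (so (A₀,B₀) is an irreducible two-dimensional representation of PSL₂(ℤ) whose T-eigenvalue ratio equals −1). Then there is no pair (A, B) of matrices in GL₃(ℂ) with A² = I and (AB)³ = I such that B is diagonalizable, the pair (A, B) is indecomposable, and ℂ³ contains a two-dimensional subspace invariant under both A and B on which the induced action is equivalent to (A₀, B₀). -/
noncomputable section
open Matrix

/-- `e(r) = exp(2πir)`. -/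
def ee (r : ℝ) : ℂ := Complex.exp (2 * Real.pi * Complex.I * r)

/-- A subspace `W` is invariant under the matrix `M` (acting by `mulVec`). -/
def Invariant {n : ℕ} (M : Matrix (Fin n) (Fin n) ℂ) (W : Submodule ℂ (Fin n → ℂ)) : Prop :=
  ∀ v ∈ W, M.mulVec v ∈ W

/-- The pair `(A, B)` is decomposable: `ℂⁿ` is the direct sum of two nonzero subspaces,
each invariant under both `A` and `B`. -/
def Decomposable {n : ℕ} (A B : Matrix (Fin n) (Fin n) ℂ) : Prop :=
  ∃ U V : Submodule ℂ (Fin n → ℂ), U ≠ ⊥ ∧ V ≠ ⊥ ∧ IsCompl U V ∧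
    Invariant A U ∧ Invariant B U ∧ Invariant A V ∧ Invariant B V

/-- The pair `(A, B)` is indecomposable. -/
def Indecomposable {n : ℕ} (A B : Matrix (Fin n) (Fin n) ℂ) : Prop :=
  ¬ Decomposable A B

/-- `(A, B)` and `(A', B')` are simultaneously conjugate:
`P A P⁻¹ = A'` and `P B P⁻¹ = B'` for a single invertible `P`. -/
def SimConj {n : ℕ} (A B A' B' : Matrix (Fin n) (Fin n) ℂ) : Prop :=
  ∃ P : Matrix (Fin n) (Fin n) ℂ, IsUnit P ∧ P * A = A' * P ∧ P * B = B' * P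

/-- `M` is diagonalizable over `ℂ`. -/
def IsDiagonalizable {n : ℕ} (M : Matrix (Fin n) (Fin n) ℂ) : Prop :=
  ∃ P : Matrix (Fin n) (Fin n) ℂ, IsUnit P ∧ ∃ d : Fin n → ℂ, P * M = Matrix.diagonal d * P

/-!
Let `W = ι(ℂ²)`. Since `B` is diagonalizable it has an eigenvector `v ∉ W`, say `B v = m v`, and
`A v = ι x + r v`. Comparing components in `ℂ³ = W ⊕ ℂv`, the relations `A² = 1` and `(AB)³ = 1`
become `(A₀ + r) x = 0`, `r² = 1`, `(mr)³ = 1` and `(C₀² + mr C₀ + (mr)²)(m x) = 0` for `C₀ = A₀B₀`.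
For `(A₀, B₀)` itself, `A₀² = 1`, `(A₀B₀)³ = 1` and `b ≠ 0` force `d = -a`, `bc = 3a²`, `4a² = 1`
and `2aλ₁³ = -1`, hence `r = ±2a`. Up to swapping coordinates `r = 2a`, and then for `x = (p, q)`
the equations reduce to `(λ₁ + m)² p = 0` and `(m² - λ₁²) q = 0`: either `m = -λ₁`, or `x = 0`.
In both cases there is `y ∈ ℂ²` with `B₀ y = m y` and `A₀ y + x = r y`. Then `v + ι y` is a common eigenvector of `A` and `B` outside `W`, and `(A, B)` decomposes.
-/

section Complement

variable {K E V : Type*} [Field K] [AddCommGroup E] [Module K E] [AddCommGroup V] [Module K V]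
  {ι : E →ₗ[K] V} {v : V}

theorem isCompl_range_span_singleton [FiniteDimensional K V] (hι : Function.Injective ι)
    (hv : v ∉ LinearMap.range ι) (hdim : Module.finrank K V = Module.finrank K E + 1) :
    IsCompl (LinearMap.range ι) (K ∙ v) := by
  have hv0 : v ≠ 0 := fun h => hv (h ▸ Submodule.zero_mem _)
  refine (Submodule.isCompl_iff_disjoint _ _ ?_).mpr
    (Submodule.disjoint_span_singleton_of_notMem hv)
  rw [LinearMap.finrank_range_of_inj hι, finrank_span_singleton hv0, hdim]

theorem exists_eq_add_smul_of_isCompl (h : IsCompl (LinearMap.range ι) (K ∙ v)) (w : V) :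
    ∃ x : E, ∃ t : K, w = ι x + t • v := by
  obtain ⟨_, ⟨x, rfl⟩, _, hz, hw⟩ :=
    Submodule.mem_sup.mp (h.sup_eq_top ▸ Submodule.mem_top (x := w))
  obtain ⟨t, rfl⟩ := Submodule.mem_span_singleton.mp hz
  exact ⟨x, t, hw.symm⟩

theorem eq_and_eq_of_add_smul_eq_add_smul (hι : Function.Injective ι) (hv : v ∉ LinearMap.range ι)
    {x x' : E} {t t' : K} (h : ι x + t • v = ι x' + t' • v) : x = x' ∧ t = t' := by
  have ht : t = t' := by
    by_contra hne
    have hsub : (t' - t) • v = ι (x - x') := by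
      rw [map_sub]; linear_combination (norm := module) -h
    apply hv
    rw [← inv_smul_smul₀ (sub_ne_zero.mpr (Ne.symm hne)) v, hsub, ← map_smul]
    exact LinearMap.mem_range_self _ _
  subst ht
  exact ⟨hι (add_right_cancel h), rfl⟩

theorem eq_zero_and_eq_one_of_add_smul_eq (hι : Function.Injective ι) (hv : v ∉ LinearMap.range ι)
    {x : E} {t : K} (h : ι x + t • v = v) : x = 0 ∧ t = 1 :=
  eq_and_eq_of_add_smul_eq_add_smul hι hv (x' := 0) (t' := 1) (by simpa using h)

end Complement

section Intertwining

variable {R m n : Type*} [CommRing R] [Fintype m] [Fintype n]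
  {ι : (m → R) →ₗ[R] (n → R)}

theorem mulVec_add_smul_of_intertwines {T : Matrix n n R} {T0 : Matrix m m R}
    (hT : ∀ y, T *ᵥ ι y = ι (T0 *ᵥ y)) {v : n → R} {u : m → R} {μ : R}
    (hv : T *ᵥ v = ι u + μ • v) (y : m → R) (t : R) :
    T *ᵥ (ι y + t • v) = ι (T0 *ᵥ y + t • u) + (t * μ) • v := by
  rw [Matrix.mulVec_add, Matrix.mulVec_smul, hT, hv, map_add, map_smul]
  module

theorem mul_intertwines {A B : Matrix n n R} {A0 B0 : Matrix m m R}
    (hA : ∀ y, A *ᵥ ι y = ι (A0 *ᵥ y)) (hB : ∀ y, B *ᵥ ι y = ι (B0 *ᵥ y)) (y : m → R) :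
    (A * B) *ᵥ ι y = ι ((A0 * B0) *ᵥ y) := by
  rw [← Matrix.mulVec_mulVec, hB, hA, Matrix.mulVec_mulVec]

end Intertwining

section Extension

variable {K m n : Type*} [Field K] [Fintype m] [Fintype n] [DecidableEq n]
  {ι : (m → K) →ₗ[K] (n → K)} {T : Matrix n n K} {T0 : Matrix m m K} {v : n → K} {u : m → K}
  {μ : K}

theorem extension_relations_of_sq_eq_one (hι : Function.Injective ι)
    (hv : v ∉ LinearMap.range ι) (hT : ∀ y, T *ᵥ ι y = ι (T0 *ᵥ y))
    (hTv : T *ᵥ v = ι u + μ • v) (hT2 : T ^ 2 = 1) : T0 *ᵥ u + μ • u = 0 ∧ μ * μ = 1 := by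
  have h : T *ᵥ (T *ᵥ v) = v := by rw [Matrix.mulVec_mulVec, ← sq, hT2, Matrix.one_mulVec]
  rw [hTv, mulVec_add_smul_of_intertwines hT hTv] at h
  exact eq_zero_and_eq_one_of_add_smul_eq hι hv h

theorem extension_relations_of_pow_three_eq_one (hι : Function.Injective ι)
    (hv : v ∉ LinearMap.range ι) (hT : ∀ y, T *ᵥ ι y = ι (T0 *ᵥ y))
    (hTv : T *ᵥ v = ι u + μ • v) (hT3 : T ^ 3 = 1) :
    T0 *ᵥ (T0 *ᵥ u + μ • u) + (μ * μ) • u = 0 ∧ μ * μ * μ = 1 := by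
  have h : T *ᵥ (T *ᵥ (T *ᵥ v)) = v := by
    rw [Matrix.mulVec_mulVec, Matrix.mulVec_mulVec, ← pow_three', hT3, Matrix.one_mulVec]
  rw [hTv, mulVec_add_smul_of_intertwines hT hTv, mulVec_add_smul_of_intertwines hT hTv] at h
  exact eq_zero_and_eq_one_of_add_smul_eq hι hv h

end Extension

theorem invariant_range {k n : ℕ} {ι : (Fin k → ℂ) →ₗ[ℂ] (Fin n → ℂ)} {M : Matrix (Fin n) (Fin n) ℂ}
    {M0 : Matrix (Fin k) (Fin k) ℂ} (h : ∀ y, M *ᵥ ι y = ι (M0 *ᵥ y)) :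
    Invariant M (LinearMap.range ι) := by
  rintro _ ⟨y, rfl⟩
  exact h y ▸ LinearMap.mem_range_self ι _

theorem invariant_span_singleton {n : ℕ} {M : Matrix (Fin n) (Fin n) ℂ} {v : Fin n → ℂ} {μ : ℂ}
    (h : M *ᵥ v = μ • v) : Invariant M (ℂ ∙ v) := by
  intro w hw
  obtain ⟨t, rfl⟩ := Submodule.mem_span_singleton.mp hw
  rw [Matrix.mulVec_smul, h]
  exact Submodule.smul_mem _ _ (Submodule.smul_mem _ _ (Submodule.mem_span_singleton_self v))

theorem decomposable_of_intertwines {k n : ℕ} {A B : Matrix (Fin n) (Fin n) ℂ}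
    {A0 B0 : Matrix (Fin k) (Fin k) ℂ} {ι : (Fin k → ℂ) →ₗ[ℂ] (Fin n → ℂ)}
    (hι : Function.Injective ι) (hk : k ≠ 0) (hn : n = k + 1)
    (hA : ∀ y, A *ᵥ ι y = ι (A0 *ᵥ y)) (hB : ∀ y, B *ᵥ ι y = ι (B0 *ᵥ y))
    {w : Fin n → ℂ} {α β : ℂ} (hw : w ∉ LinearMap.range ι) (hAw : A *ᵥ w = α • w)
    (hBw : B *ᵥ w = β • w) : Decomposable A B := by
  refine ⟨LinearMap.range ι, ℂ ∙ w, ?_, ?_, isCompl_range_span_singleton hι hw (by simpa using hn),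
    invariant_range hA, invariant_range hB, invariant_span_singleton hAw,
    invariant_span_singleton hBw⟩
  · intro h
    have hrank := LinearMap.finrank_range_of_inj hι
    rw [h, finrank_bot, Module.finrank_fin_fun] at hrank
    exact hk hrank.symm
  · rw [Ne, Submodule.span_singleton_eq_bot]
    rintro rfl
    exact hw (Submodule.zero_mem _)

theorem IsDiagonalizable.exists_eigenvector_notMem {n : ℕ} {M : Matrix (Fin n) (Fin n) ℂ}
    (hM : IsDiagonalizable M) {W : Submodule ℂ (Fin n → ℂ)} (hW : W ≠ ⊤) :
    ∃ (v : Fin n → ℂ) (μ : ℂ), M *ᵥ v = μ • v ∧ v ∉ W := by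
  obtain ⟨P, hP, d, hPM⟩ := hM
  have hdet := (Matrix.isUnit_iff_isUnit_det P).mp hP
  have hPinv : P⁻¹ * P = 1 := Matrix.nonsing_inv_mul P hdet
  have hMP : M * P⁻¹ = P⁻¹ * Matrix.diagonal d :=
    calc M * P⁻¹ = P⁻¹ * (P * M) * P⁻¹ := by rw [← Matrix.mul_assoc P⁻¹, hPinv, Matrix.one_mul]
      _ = P⁻¹ * Matrix.diagonal d := by
        rw [hPM, Matrix.mul_assoc, Matrix.mul_assoc, Matrix.mul_nonsing_inv P hdet, Matrix.mul_one]
  have heig : ∀ j, M *ᵥ (P⁻¹ *ᵥ Pi.single j 1) = d j • (P⁻¹ *ᵥ Pi.single j 1) := by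
    intro j
    rw [Matrix.mulVec_mulVec, hMP, ← Matrix.mulVec_mulVec, Matrix.diagonal_mulVec_single, mul_one,
      ← Matrix.mulVec_smul, ← Pi.single_smul, smul_eq_mul, mul_one]
  by_contra! h
  refine hW (eq_top_iff.mpr fun w _ => ?_)
  have hw : w = ∑ j, (P *ᵥ w) j • (P⁻¹ *ᵥ Pi.single j 1) := by
    simp_rw [← Matrix.mulVec_smul, ← Matrix.mulVec_sum, ← Pi.single_smul, smul_eq_mul, mul_one,
      Finset.univ_sum_single, Matrix.mulVec_mulVec, hPinv, Matrix.one_mulVec]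
  rw [hw]
  exact Submodule.sum_mem _ fun j _ => Submodule.smul_mem _ _ (h _ (d j) (heig j))

theorem fin_two_relations_of_sq_eq_one {a b c d : ℂ} (h : !![a, b; c, d] ^ 2 = 1) (hb : b ≠ 0) :
    d = -a ∧ a ^ 2 + b * c = 1 := by
  rw [sq, mul_fin_two, one_fin_two] at h
  have h00 : a * a + b * c = 1 := congrFun₂ h 0 0
  have h01 : a * b + b * d = 0 := congrFun₂ h 0 1
  have htr : b * (a + d) = 0 := by linear_combination h01
  exact ⟨by linear_combination (mul_eq_zero.mp htr).resolve_left hb, by linear_combination h00⟩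

theorem fin_two_relations_of_mul_diagonal_pow_three_eq_one {a b c l1 : ℂ}
    (h : (!![a, b; c, -a] * diagonal ![l1, -l1]) ^ 3 = 1) (hb : b ≠ 0) (h1 : a ^ 2 + b * c = 1) :
    4 * a ^ 2 = 1 ∧ 2 * a * l1 ^ 3 = -1 := by
  rw [diagonal_vec2, mul_fin_two, pow_succ, sq, mul_fin_two, mul_fin_two, one_fin_two] at h
  have h00 := congrFun₂ h 0 0
  have h01 := congrFun₂ h 0 1
  simp only [of_apply, cons_val', cons_val_zero, cons_val_one, empty_val', cons_val_fin_one]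
    at h00 h01
  have hl1 : l1 ≠ 0 := by
    rintro rfl
    simp at h00
  have hbc : b * c = 3 * a ^ 2 := by
    have : b * l1 ^ 3 * (3 * a ^ 2 - b * c) = 0 := by linear_combination -h01
    linear_combination -(mul_eq_zero.mp this).resolve_left (mul_ne_zero hb (pow_ne_zero 3 hl1))
  have h4 : 4 * a ^ 2 = 1 := by linear_combination h1 - hbc
  exact ⟨h4, by linear_combination -h00 - 3 * l1 ^ 3 * a * hbc - 2 * a * l1 ^ 3 * h4⟩

theorem exists_splitting_scalar_of_eq_two_mul {a b c l1 p q r m : ℂ} (hb : b ≠ 0)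
    (h4 : 4 * a ^ 2 = 1) (hl : 2 * a * l1 ^ 3 = -1) (hr : r = 2 * a) (hm : m ^ 3 = r)
    (hE1 : p * a + q * b + r * p = 0) (hE2 : p * c - q * a + r * q = 0)
    (hG1 : (2 * a * l1 + m * r) * (a * l1 * p - b * l1 * q) + ((m * r) ^ 2 - l1 ^ 2) * p = 0)
    (hG2 : (2 * a * l1 + m * r) * (c * l1 * p + a * l1 * q) + ((m * r) ^ 2 - l1 ^ 2) * q = 0) :
    ∃ s t : ℂ, (s * l1 = m * s ∧ -(t * l1) = m * t) ∧
      s * a + t * b + p = r * s ∧ s * c - t * a + q = r * t := by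
  subst hr
  have hp : (l1 + m) ^ 2 * p = 0 := by
    linear_combination hG1 + 2 * a * l1 * (m + l1) * hE1 - (2 * l1 * (m + l1) + m ^ 2) * p * h4
  have hq : (m - l1) * (m + l1) * q = 0 := by
    linear_combination hG2 - 2 * a * l1 * (m + l1) * hE2 - m ^ 2 * q * h4
  have hml : m - l1 ≠ 0 := by
    intro h
    have : (2 : ℂ) = 0 := by
      linear_combination hl + 2 * a * (m ^ 2 + m * l1 + l1 ^ 2) * h - 2 * a * hm - h4
    norm_num at this
  by_cases hm' : m + l1 = 0
  · refine ⟨0, -p / b, ⟨by ring, by linear_combination p / b * hm'⟩, ?_, ?_⟩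
    · field_simp
      ring
    · field_simp
      linear_combination hE1
  · have hp0 : p = 0 := (mul_eq_zero.mp hp).resolve_left (by rw [add_comm]; exact pow_ne_zero 2 hm')
    have hq0 : q = 0 := (mul_eq_zero.mp hq).resolve_left (mul_ne_zero hml hm')
    exact ⟨0, 0, by simp [hp0, hq0]⟩

theorem exists_splitting_scalar {a b c l1 p q r m : ℂ} (hb : b ≠ 0) (hc : c ≠ 0)
    (h4 : 4 * a ^ 2 = 1) (hl : 2 * a * l1 ^ 3 = -1) (hr : r * r = 1) (hm : m ^ 3 = r)
    (hE1 : p * a + q * b + r * p = 0) (hE2 : p * c - q * a + r * q = 0)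
    (hG1 : (2 * a * l1 + m * r) * (a * l1 * p - b * l1 * q) + ((m * r) ^ 2 - l1 ^ 2) * p = 0)
    (hG2 : (2 * a * l1 + m * r) * (c * l1 * p + a * l1 * q) + ((m * r) ^ 2 - l1 ^ 2) * q = 0) :
    ∃ s t : ℂ, (s * l1 = m * s ∧ -(t * l1) = m * t) ∧
      s * a + t * b + p = r * s ∧ s * c - t * a + q = r * t := by
  have hfac : (r - 2 * a) * (r + 2 * a) = 0 := by linear_combination hr - h4
  rcases mul_eq_zero.mp hfac with hr' | hr'
  · exact exists_splitting_scalar_of_eq_two_mul hb h4 hl (by linear_combination hr') hm hE1 hE2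
      hG1 hG2
  -- Swapping the coordinates of `ℂ²` turns `(a, b, c, l1)` into `(-a, c, b, -l1)`, so `r = 2 (-a)`.
  obtain ⟨t, s, ⟨ht, hs⟩, hq, hp⟩ :=
    exists_splitting_scalar_of_eq_two_mul (a := -a) (b := c) (c := b) (l1 := -l1) (p := q) (q := p)
      hc (by linear_combination h4) (by linear_combination hl) (by linear_combination hr') hm
      (by linear_combination hE2) (by linear_combination hE1) (by linear_combination hG2)
      (by linear_combination hG1)
  exact ⟨s, t, ⟨by linear_combination hs, by linear_combination ht⟩, by linear_combination hp,
    by linear_combination hq⟩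

theorem mulVec_vec2 {R : Type*} [NonUnitalNonAssocSemiring R] (a₁₁ a₁₂ a₂₁ a₂₂ p q : R) :
    !![a₁₁, a₁₂; a₂₁, a₂₂] *ᵥ ![p, q] = ![a₁₁ * p + a₁₂ * q, a₂₁ * p + a₂₂ * q] := by
  ext i
  fin_cases i <;> simp [mulVec]

theorem exists_splitting {a b c l1 r m : ℂ} {x : Fin 2 → ℂ} (hb : b ≠ 0) (hc : c ≠ 0)
    (h1 : a ^ 2 + b * c = 1) (h4 : 4 * a ^ 2 = 1) (hl : 2 * a * l1 ^ 3 = -1)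
    (hx : !![a, b; c, -a] *ᵥ x + r • x = 0) (hr : r * r = 1)
    (hC : (!![a, b; c, -a] * diagonal ![l1, -l1]) *ᵥ
        ((!![a, b; c, -a] * diagonal ![l1, -l1]) *ᵥ (m • x) + (m * r) • m • x) +
        (m * r * (m * r)) • m • x = 0)
    (hω : m * r * (m * r) * (m * r) = 1) :
    ∃ y, diagonal ![l1, -l1] *ᵥ y = m • y ∧ !![a, b; c, -a] *ᵥ y + x = r • y := by
  obtain ⟨p, q, rfl⟩ : ∃ p q : ℂ, x = ![p, q] := ⟨x 0, x 1, by ext i; fin_cases i <;> rfl⟩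
  simp only [diagonal_vec2, mul_fin_two, mulVec_vec2, smul_vec2, vec2_add, smul_eq_mul,
    cons_eq_zero_iff, zero_empty, and_true] at hx hC
  obtain ⟨hE1, hE2⟩ := hx
  obtain ⟨hC1, hC2⟩ := hC
  have hm3 : m ^ 3 = r := by linear_combination r * hω - m ^ 3 * (r ^ 2 + 1) * hr
  have hm : m ≠ 0 := by
    rintro rfl
    simp at hω
  -- `hG1`, `hG2` of `exists_splitting_scalar` are `hC` rewritten by Cayley–Hamilton,
  -- `C₀² = 2aλ₁ C₀ - λ₁²`.
  obtain ⟨s, t, ⟨hs, ht⟩, hA1, hA2⟩ := exists_splitting_scalar (p := p) (q := q) hb hc h4 hl hr hm3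
    (by linear_combination hE1) (by linear_combination hE2)
    (mul_left_cancel₀ hm (by linear_combination hC1 + m * l1 ^ 2 * p * h1))
    (mul_left_cancel₀ hm (by linear_combination hC2 + m * l1 ^ 2 * q * h1))
  refine ⟨![s, t], ?_, ?_⟩
  · rw [diagonal_vec2, mulVec_vec2, smul_vec2]
    exact vec2_eq (by linear_combination hs) (by linear_combination ht)
  · rw [mulVec_vec2, smul_vec2, vec2_add]
    exact vec2_eq (by linear_combination hA1) (by linear_combination hA2)

/-- if `(A₀, B₀)` is an irreducible two-dimensional pair with
`B₀ = diag(λ₁, −λ₁)` (T-eigenvalue ratio `−1`), then there is no indecomposable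
three-dimensional pair `(A, B)` with `B` diagonalizable admitting a two-dimensional
invariant subspace on which the induced action is equivalent to `(A₀, B₀)`. -/
theorem stmt_3 (a b c d l1 : ℂ)
    (A0 : Matrix (Fin 2) (Fin 2) ℂ) (hA0 : A0 = !![a, b; c, d])
    (B0 : Matrix (Fin 2) (Fin 2) ℂ) (hB0 : B0 = Matrix.diagonal ![l1, -l1])
    (hA02 : A0 ^ 2 = 1) (hAB03 : (A0 * B0) ^ 3 = 1) (hbc : b * c ≠ 0) :
    ¬ ∃ A B : Matrix (Fin 3) (Fin 3) ℂ, A ^ 2 = 1 ∧ (A * B) ^ 3 = 1 ∧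
      IsDiagonalizable B ∧ Indecomposable A B ∧
      ∃ ι : (Fin 2 → ℂ) →ₗ[ℂ] (Fin 3 → ℂ), Function.Injective ι ∧
        (∀ v, A.mulVec (ι v) = ι (A0.mulVec v)) ∧
        (∀ v, B.mulVec (ι v) = ι (B0.mulVec v)) := by
  rintro ⟨A, B, hA2, hAB3, hBdiag, hIndec, ι, hι, hιA, hιB⟩
  obtain ⟨hb, hc⟩ := mul_ne_zero_iff.mp hbc
  subst hA0 hB0
  obtain ⟨rfl, h1⟩ := fin_two_relations_of_sq_eq_one hA02 hb
  obtain ⟨h4, hl⟩ := fin_two_relations_of_mul_diagonal_pow_three_eq_one hAB03 hb h1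
  have hW : LinearMap.range ι ≠ ⊤ := by
    intro h
    have hrank := LinearMap.finrank_range_of_inj hι
    rw [h, finrank_top] at hrank
    simp at hrank
  obtain ⟨v, m, hBv, hv⟩ := hBdiag.exists_eigenvector_notMem hW
  obtain ⟨x, r, hAv⟩ :=
    exists_eq_add_smul_of_isCompl (isCompl_range_span_singleton hι hv (by simp)) (A *ᵥ v)
  have hCv : (A * B) *ᵥ v = ι (m • x) + (m * r) • v := by
    rw [← mulVec_mulVec, hBv, mulVec_smul, hAv, map_smul]
    module
  obtain ⟨hx, hr⟩ := extension_relations_of_sq_eq_one hι hv hιA hAv hA2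
  obtain ⟨hCx, hω⟩ :=
    extension_relations_of_pow_three_eq_one hι hv (mul_intertwines hιA hιB) hCv hAB3
  obtain ⟨y, hBy, hAy⟩ := exists_splitting hb hc h1 h4 hl hx hr hCx hω
  refine hIndec (decomposable_of_intertwines hι two_ne_zero rfl hιA hιB (w := ι y + v)
    (α := r) (β := m) ?_ ?_ ?_)
  · exact fun h => hv (by simpa using Submodule.sub_mem _ h (LinearMap.mem_range_self ι y))
  · rw [mulVec_add, hιA, hAv, ← add_assoc, ← map_add, hAy, map_smul, smul_add]
  · rw [mulVec_add, hιB, hBy, hBv, map_smul, smul_add]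
end
end

section
/- Let λ₁, λ₂, λ₃ be nonzero complex numbers, σ ∈ ℂ, A = [[−σ, 1, 1],[0, σ, 0],[0, 0, σ]] and B = diag(λ₁, λ₂, λ₃). Then A² = I and (AB)³ = I hold if and only if σ² = 1, λ₁³ = −σ, λ₂³ = σ, λ₃³ = σ, λ₁² − λ₁λ₂ + λ₂² = 0 and λ₁² − λ₁λ₃ + λ₃² = 0 (equivalently, σ = −λ₁³ = λ₂³ = λ₃³ ∈ {±1} and λ₂/λ₁ and λ₃/λ₁ are primitive cube roots of −1). -/
noncomputable section
open Matrix

set_option maxHeartbeats 1000000 in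
/-- with `A = [[−σ,1,1],[0,σ,0],[0,0,σ]]`, `B = diag(λ₁,λ₂,λ₃)` (λᵢ ≠ 0),
`A² = I ∧ (AB)³ = I` holds iff `σ² = 1`, `λ₁³ = −σ`, `λ₂³ = σ`, `λ₃³ = σ`,
`λ₁² − λ₁λ₂ + λ₂² = 0` and `λ₁² − λ₁λ₃ + λ₃² = 0`. -/
theorem stmt_4 (l1 l2 l3 σ : ℂ) (hl1 : l1 ≠ 0) (hl2 : l2 ≠ 0) (hl3 : l3 ≠ 0)
    (A : Matrix (Fin 3) (Fin 3) ℂ) (hA : A = !![-σ, 1, 1; 0, σ, 0; 0, 0, σ])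
    (B : Matrix (Fin 3) (Fin 3) ℂ) (hB : B = Matrix.diagonal ![l1, l2, l3]) :
    (A ^ 2 = 1 ∧ (A * B) ^ 3 = 1) ↔
      (σ ^ 2 = 1 ∧ l1 ^ 3 = -σ ∧ l2 ^ 3 = σ ∧ l3 ^ 3 = σ ∧
        l1 ^ 2 - l1 * l2 + l2 ^ 2 = 0 ∧ l1 ^ 2 - l1 * l3 + l3 ^ 2 = 0) := by
  have hd : (Matrix.diagonal ![l1,l2,l3] : Matrix (Fin 3) (Fin 3) ℂ) = !![l1,0,0;0,l2,0;0,0,l3] := by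
    ext i j; fin_cases i <;> fin_cases j <;>
      simp [Matrix.diagonal_apply, Matrix.vecHead, Matrix.vecTail]
  subst hA; rw [hB, hd]
  simp only [pow_succ, pow_zero, one_mul, Matrix.mul_fin_three, Matrix.one_fin_three,
    ← Matrix.ext_iff, Fin.forall_fin_succ, Fin.forall_fin_zero_pi,
    Matrix.cons_val', Matrix.cons_val_zero, Matrix.cons_val_one, Matrix.head_cons,
    Matrix.cons_val_fin_one, Matrix.empty_val', Matrix.cons_val_succ, Matrix.head_fin_const,
    Matrix.of_apply, Matrix.cons_val_zero, Fin.succ_zero_eq_one]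
  ring_nf
  norm_num
  rintro (rfl | rfl)
  · constructor
    · rintro ⟨⟨h1, h2, h3⟩, h4, h5⟩
      refine ⟨by linear_combination -h1, by linear_combination h4, by linear_combination h5, ?_, ?_⟩
      · have h : l2 * (-(l1 * l2) + l1 ^ 2 + l2 ^ 2) = 0 := by linear_combination h2
        rcases mul_eq_zero.1 h with h | h
        · exact absurd h hl2
        · exact h
      · have h : l3 * (-(l1 * l3) + l1 ^ 2 + l3 ^ 2) = 0 := by linear_combination h3
        rcases mul_eq_zero.1 h with h | h
        · exact absurd h hl3
        · exact h
    · rintro ⟨g1, g2, g3, g4, g5⟩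
      exact ⟨⟨by linear_combination -g1, by linear_combination l2 * g4,
        by linear_combination l3 * g5⟩, by linear_combination g2, by linear_combination g3⟩
  · constructor
    · rintro ⟨⟨h1, h2, h3⟩, h4, h5⟩
      refine ⟨by linear_combination h1, by linear_combination -h4, by linear_combination -h5, ?_, ?_⟩
      · have h : l2 * (-(l1 * l2) + l1 ^ 2 + l2 ^ 2) = 0 := by linear_combination h2
        rcases mul_eq_zero.1 h with h | h
        · exact absurd h hl2
        · exact h
      · have h : l3 * (-(l1 * l3) + l1 ^ 2 + l3 ^ 2) = 0 := by linear_combination h3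
        rcases mul_eq_zero.1 h with h | h
        · exact absurd h hl3
        · exact h
    · rintro ⟨g1, g2, g3, g4, g5⟩
      exact ⟨⟨by linear_combination g1, by linear_combination l2 * g4,
        by linear_combination l3 * g5⟩, by linear_combination -g2, by linear_combination -g3⟩
end
end

section
/- Let λ₁, λ₂, λ₃ be nonzero complex numbers, σ ∈ ℂ, A = [[−σ, 1, 1],[0, σ, 0],[0, 0, σ]] and B = diag(λ₁, λ₂, λ₃), and suppose A² = I and (AB)³ = I. Then λ₁, λ₂, λ₃ are sixth roots of unity with λ₁ ≠ λ₂ and λ₁ ≠ λ₃; if λ₂ ≠ λ₃ then the pair (A, B) is indecomposable, while if λ₂ = λ₃ then (A, B) is decomposable. -/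
noncomputable section
open Matrix

/-!
`A² = 1` forces `σ² = 1`. Since `AB` is diagonal plus a first row, `(AB)³` is explicit: its
diagonal gives `(σλᵢ)³ = ∓1`, hence `λᵢ⁶ = 1`, and its entries `(1, j)` give
`λⱼ (λ₁² − λ₁λⱼ + λⱼ²) = 0`, which excludes `λ₁ = λⱼ`.

Decompositions of `ℂⁿ` into invariant subspaces correspond to idempotents `≠ 0, 1` commuting with
`A` and `B` (range and kernel). When the `λᵢ` are distinct such a matrix is diagonal, because it
commutes with `B`, and scalar, because the first row of `A` has no zeros off the diagonal; so it is
`0` or `1`. When `λ₂ = λ₃`, the projection onto `ℂ (0, 1, −1)` along `{x₃ = 0}` commutes with both.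
-/

section Decomposition

variable {n : ℕ}

theorem invariant_iff_mem_invtSubmodule {M : Matrix (Fin n) (Fin n) ℂ}
    {W : Submodule ℂ (Fin n → ℂ)} :
    Invariant M W ↔ W ∈ Module.End.invtSubmodule (toLin' M) :=
  Iff.rfl

theorem commute_toLin'_iff {P M : Matrix (Fin n) (Fin n) ℂ} :
    Commute (toLin' P) (toLin' M) ↔ Commute P M :=
  commute_map_iff (f := toLinAlgEquiv' (R := ℂ) (n := Fin n)) (AlgEquiv.injective _)

theorem isIdempotentElem_toLin'_iff {P : Matrix (Fin n) (Fin n) ℂ} :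
    IsIdempotentElem (toLin' P) ↔ IsIdempotentElem P :=
  show toLinAlgEquiv' P * toLinAlgEquiv' P = toLinAlgEquiv' P ↔ P * P = P by
    rw [← map_mul, EmbeddingLike.apply_eq_iff_eq]

theorem decomposable_iff_exists_isIdempotentElem {A B : Matrix (Fin n) (Fin n) ℂ} :
    Decomposable A B ↔ ∃ P : Matrix (Fin n) (Fin n) ℂ,
      IsIdempotentElem P ∧ P ≠ 0 ∧ P ≠ 1 ∧ Commute P A ∧ Commute P B := by
  simp only [Decomposable, invariant_iff_mem_invtSubmodule, ← commute_toLin'_iff,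
    ← isIdempotentElem_toLin'_iff]
  constructor
  · rintro ⟨U, V, hU, hV, hUV, hAU, hBU, hAV, hBV⟩
    obtain ⟨P, hP⟩ := toLin'.surjective (U.projection V hUV)
    have hf : IsIdempotentElem (toLin' P) := hP ▸ U.isIdempotentElem_projection hUV
    have hrange : LinearMap.range (toLin' P) = U := hP ▸ Submodule.range_projection hUV
    have hker : LinearMap.ker (toLin' P) = V := hP ▸ Submodule.ker_projection hUV
    refine ⟨P, hf, ?_, ?_, ?_, ?_⟩
    · rintro rfl
      exact hU (by simp [← hrange])
    · rintro rfl
      exact hV (by simp [← hker])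
    · exact (LinearMap.IsIdempotentElem.commute_iff hf).2 ⟨hrange ▸ hAU, hker ▸ hAV⟩
    · exact (LinearMap.IsIdempotentElem.commute_iff hf).2 ⟨hrange ▸ hBU, hker ▸ hBV⟩
  · rintro ⟨P, hP, hP0, hP1, hPA, hPB⟩
    obtain ⟨hAU, hAV⟩ := (LinearMap.IsIdempotentElem.commute_iff hP).1 hPA
    obtain ⟨hBU, hBV⟩ := (LinearMap.IsIdempotentElem.commute_iff hP).1 hPB
    refine ⟨_, _, ?_, ?_, LinearMap.IsIdempotentElem.isCompl hP, hAU, hBU, hAV, hBV⟩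
    · rwa [Ne, LinearMap.range_eq_bot, LinearEquiv.map_eq_zero_iff]
    · rwa [Ne, LinearMap.IsIdempotentElem.ker_eq_range_one_sub hP, LinearMap.range_eq_bot,
        sub_eq_zero, Module.End.one_eq_id, ← toLin'_one, EmbeddingLike.apply_eq_iff_eq, eq_comm]

theorem indecomposable_of_forall_commute_eq_scalar {A B : Matrix (Fin n) (Fin n) ℂ}
    (h : ∀ P, Commute P A → Commute P B → ∃ c, P = scalar (Fin n) c) :
    Indecomposable A B := by
  rw [Indecomposable, decomposable_iff_exists_isIdempotentElem]
  rintro ⟨P, hP, hP0, hP1, hPA, hPB⟩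
  obtain ⟨c, rfl⟩ := h P hPA hPB
  have : Nonempty (Fin n) := not_isEmpty_iff.1 fun _ => hP0 (Subsingleton.elim _ _)
  have hc : IsIdempotentElem c := scalar_inj.1 ((map_mul (scalar (Fin n)) c c).trans hP)
  rcases IsIdempotentElem.iff_eq_zero_or_one.1 hc with rfl | rfl
  · exact hP0 (map_zero _)
  · exact hP1 (map_one _)

end Decomposition

namespace Matrix

variable {ι R : Type*} [Fintype ι] [DecidableEq ι] [CommRing R] [NoZeroDivisors R]

theorem apply_eq_zero_of_commute_diagonal {M : Matrix ι ι R} {d : ι → R}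
    (h : Commute M (diagonal d)) {i j : ι} (hij : d i ≠ d j) : M i j = 0 := by
  have hij' := congr_fun₂ h.eq i j
  rw [mul_diagonal, diagonal_mul] at hij'
  have : M i j * (d j - d i) = 0 := by linear_combination hij'
  exact (mul_eq_zero.1 this).resolve_right (sub_ne_zero.2 hij.symm)

theorem eq_diagonal_of_commute_diagonal {M : Matrix ι ι R} {d : ι → R}
    (h : Commute M (diagonal d)) (hd : Function.Injective d) : M = diagonal fun i => M i i := by
  ext i j
  rcases eq_or_ne i j with rfl | hij
  · simp
  · rw [diagonal_apply_ne _ hij, apply_eq_zero_of_commute_diagonal h (hd.ne hij)]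

theorem apply_eq_apply_of_diagonal_commute {M : Matrix ι ι R} {p : ι → R}
    (h : Commute (diagonal p) M) {i j : ι} (hij : M i j ≠ 0) : p i = p j := by
  have hij' := congr_fun₂ h.eq i j
  rw [mul_diagonal, diagonal_mul] at hij'
  have : M i j * (p i - p j) = 0 := by linear_combination hij'
  exact sub_eq_zero.1 ((mul_eq_zero.1 this).resolve_left hij)

end Matrix

section FirstRow

variable {R : Type*} [CommRing R] (a b c x y : R)

theorem sq_diagonal_add_firstRow :
    !![a, x, y; 0, b, 0; 0, 0, c] ^ 2 =
      !![a ^ 2, x * (a + b), y * (a + c); 0, b ^ 2, 0; 0, 0, c ^ 2] := by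
  ext i j
  fin_cases i <;> fin_cases j <;> simp [sq, mul_apply, Fin.sum_univ_three] <;> ring

theorem pow_three_diagonal_add_firstRow :
    !![a, x, y; 0, b, 0; 0, 0, c] ^ 3 =
      !![a ^ 3, x * (a ^ 2 + a * b + b ^ 2), y * (a ^ 2 + a * c + c ^ 2);
        0, b ^ 3, 0; 0, 0, c ^ 3] := by
  ext i j
  fin_cases i <;> fin_cases j <;> simp [pow_succ, mul_apply, Fin.sum_univ_three] <;> ring

end FirstRow

theorem pow_six_eq_one {R : Type*} [CommRing R] {σ l : R} (hσ : σ ^ 2 = 1)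
    (h : ((σ * l) ^ 3) ^ 2 = 1) : l ^ 6 = 1 := by
  linear_combination h - l ^ 6 * (σ ^ 4 + σ ^ 2 + 1) * hσ

theorem ne_of_mul_sq_sub_mul_add_sq_eq_zero {R : Type*} [CommRing R] [NoZeroDivisors R] {x y : R}
    (hy : y ≠ 0) (h : y * (x ^ 2 - x * y + y ^ 2) = 0) : x ≠ y := by
  rintro rfl
  exact hy (pow_eq_zero_iff three_ne_zero |>.1 (by linear_combination h))

section PairOfMatrices

variable {σ l1 l2 l3 : ℂ}

theorem entries_of_pow_three_eq_one (hσ : σ ^ 2 = 1)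
    (h : (!![-σ, 1, 1; 0, σ, 0; 0, 0, σ] * diagonal ![l1, l2, l3]) ^ 3 = 1) :
    (σ * l1) ^ 3 = -1 ∧ (σ * l2) ^ 3 = 1 ∧ (σ * l3) ^ 3 = 1 ∧
      l2 * (l1 ^ 2 - l1 * l2 + l2 ^ 2) = 0 ∧ l3 * (l1 ^ 2 - l1 * l3 + l3 ^ 2) = 0 := by
  have hAB : !![-σ, 1, 1; 0, σ, 0; 0, 0, σ] * diagonal ![l1, l2, l3] =
      !![-(σ * l1), l2, l3; 0, σ * l2, 0; 0, 0, σ * l3] := by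
    ext i j
    fin_cases i <;> fin_cases j <;> simp [mul_comm]
  rw [hAB, pow_three_diagonal_add_firstRow] at h
  have e00 : (-(σ * l1)) ^ 3 = 1 := by simpa using congr_fun₂ h 0 0
  have e11 : (σ * l2) ^ 3 = 1 := by simpa using congr_fun₂ h 1 1
  have e22 : (σ * l3) ^ 3 = 1 := by simpa using congr_fun₂ h 2 2
  have e01 : l2 * ((-(σ * l1)) ^ 2 + -(σ * l1) * (σ * l2) + (σ * l2) ^ 2) = 0 := by
    simpa using congr_fun₂ h 0 1
  have e02 : l3 * ((-(σ * l1)) ^ 2 + -(σ * l1) * (σ * l3) + (σ * l3) ^ 2) = 0 := by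
    simpa using congr_fun₂ h 0 2
  exact ⟨by linear_combination -e00, e11, e22,
    by linear_combination e01 - l2 * (l1 ^ 2 - l1 * l2 + l2 ^ 2) * hσ,
    by linear_combination e02 - l3 * (l1 ^ 2 - l1 * l3 + l3 ^ 2) * hσ⟩

theorem eq_scalar_of_commute (h12 : l1 ≠ l2) (h13 : l1 ≠ l3) (h23 : l2 ≠ l3)
    {P : Matrix (Fin 3) (Fin 3) ℂ} (hPA : Commute P !![-σ, 1, 1; 0, σ, 0; 0, 0, σ])
    (hPB : Commute P (diagonal ![l1, l2, l3])) : P = scalar (Fin 3) (P 0 0) := by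
  have hinj : Function.Injective ![l1, l2, l3] := by
    intro i j
    fin_cases i <;> fin_cases j <;> simp [h12, h13, h23, h12.symm, h13.symm, h23.symm]
  set p := fun i => P i i
  have hP : P = diagonal p := eq_diagonal_of_commute_diagonal hPB hinj
  rw [hP] at hPA ⊢
  have h01 := apply_eq_apply_of_diagonal_commute hPA (i := 0) (j := 1) (by simp)
  have h02 := apply_eq_apply_of_diagonal_commute hPA (i := 0) (j := 2) (by simp)
  rw [diagonal_apply_eq, scalar_apply]
  congr 1
  funext i
  fin_cases i <;> simp [← h01, ← h02]

theorem indecomposable_of_pairwise_ne (h12 : l1 ≠ l2) (h13 : l1 ≠ l3) (h23 : l2 ≠ l3) :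
    Indecomposable !![-σ, 1, 1; 0, σ, 0; 0, 0, σ] (diagonal ![l1, l2, l3]) :=
  indecomposable_of_forall_commute_eq_scalar fun P hPA hPB =>
    ⟨P 0 0, eq_scalar_of_commute h12 h13 h23 hPA hPB⟩

theorem decomposable_of_eq :
    Decomposable !![-σ, 1, 1; 0, σ, 0; 0, 0, σ] (diagonal ![l1, l2, l2]) := by
  rw [decomposable_iff_exists_isIdempotentElem]
  refine ⟨!![0, 0, 0; 0, 0, -1; 0, 0, 1], ?_, fun h => ?_, fun h => ?_, ?_, ?_⟩
  · ext i j
    fin_cases i <;> fin_cases j <;> simp [mul_apply, Fin.sum_univ_three]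
  · simpa using congr_fun₂ h 2 2
  · simpa using congr_fun₂ h 0 0
  · ext i j
    fin_cases i <;> fin_cases j <;> simp [mul_apply, Fin.sum_univ_three]
  · ext i j
    fin_cases i <;> fin_cases j <;> simp [mul_apply, Fin.sum_univ_three]

end PairOfMatrices

theorem stmt_5_general (l1 l2 l3 σ : ℂ) (hl2 : l2 ≠ 0) (hl3 : l3 ≠ 0)
    (A : Matrix (Fin 3) (Fin 3) ℂ) (hA : A = !![-σ, 1, 1; 0, σ, 0; 0, 0, σ])
    (B : Matrix (Fin 3) (Fin 3) ℂ) (hB : B = Matrix.diagonal ![l1, l2, l3])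
    (hA2 : A ^ 2 = 1) (hAB3 : (A * B) ^ 3 = 1) :
    l1 ^ 6 = 1 ∧ l2 ^ 6 = 1 ∧ l3 ^ 6 = 1 ∧ l1 ≠ l2 ∧ l1 ≠ l3 ∧
      (l2 ≠ l3 → Indecomposable A B) ∧ (l2 = l3 → Decomposable A B) := by
  subst hA hB
  have hσ : σ ^ 2 = 1 := by
    rw [sq_diagonal_add_firstRow] at hA2
    simpa only [of_apply, cons_val', cons_val_one, cons_val_zero, cons_val_fin_one,
      one_apply_eq] using congr_fun₂ hA2 1 1
  obtain ⟨h1, h2, h3, h12, h13⟩ := entries_of_pow_three_eq_one hσ hAB3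
  have hne12 := ne_of_mul_sq_sub_mul_add_sq_eq_zero hl2 h12
  have hne13 := ne_of_mul_sq_sub_mul_add_sq_eq_zero hl3 h13
  refine ⟨pow_six_eq_one hσ (by rw [h1]; norm_num), pow_six_eq_one hσ (by rw [h2]; norm_num),
    pow_six_eq_one hσ (by rw [h3]; norm_num), hne12, hne13,
    indecomposable_of_pairwise_ne hne12 hne13, ?_⟩
  rintro rfl
  exact decomposable_of_eq

/-- with `A = [[−σ,1,1],[0,σ,0],[0,0,σ]]`, `B = diag(λ₁,λ₂,λ₃)` (λᵢ ≠ 0),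
if `A² = I` and `(AB)³ = I` then the `λᵢ` are sixth roots of unity with `λ₁ ≠ λ₂`,
`λ₁ ≠ λ₃`; the pair `(A, B)` is indecomposable if `λ₂ ≠ λ₃` and decomposable if
`λ₂ = λ₃`. -/
theorem stmt_5 (l1 l2 l3 σ : ℂ) (hl1 : l1 ≠ 0) (hl2 : l2 ≠ 0) (hl3 : l3 ≠ 0)
    (A : Matrix (Fin 3) (Fin 3) ℂ) (hA : A = !![-σ, 1, 1; 0, σ, 0; 0, 0, σ])
    (B : Matrix (Fin 3) (Fin 3) ℂ) (hB : B = Matrix.diagonal ![l1, l2, l3])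
    (hA2 : A ^ 2 = 1) (hAB3 : (A * B) ^ 3 = 1) :
    l1 ^ 6 = 1 ∧ l2 ^ 6 = 1 ∧ l3 ^ 6 = 1 ∧ l1 ≠ l2 ∧ l1 ≠ l3 ∧
      (l2 ≠ l3 → Indecomposable A B) ∧ (l2 = l3 → Decomposable A B) :=
  stmt_5_general l1 l2 l3 σ hl2 hl3 A hA B hB hA2 hAB3
end
end

section
/- Let λ₁, λ₂, λ₃ be nonzero complex numbers, σ ∈ ℂ, A = [[σ, −2σ, 1],[0, −σ, 1],[0, 0, σ]] and B = diag(λ₁, λ₂, λ₃). Then A² = I and (AB)³ = I hold if and only if σ² = 1, λ₁³ = σ, λ₂³ = −σ, λ₃³ = σ, and either (λ₂/λ₁ = e(1/6) and λ₂/λ₃ = e(5/6)) or (λ₂/λ₁ = e(5/6) and λ₂/λ₃ = e(1/6)). Moreover, whenever these conditions hold, the pair (A, B) is indecomposable. -/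
noncomputable section
open Matrix

/-!
Both `A` and `AB` are upper triangular, and `A² = σ² • 1`. The diagonal of `(AB)³` is
`(σλ₁)³, (-σλ₂)³, (σλ₃)³`, and once `σ² = 1` and the `λᵢ` are nonzero its off-diagonal entries vanish
exactly when `λ₁² - λ₁λ₂ + λ₂² = 0`, `λ₃² - λ₃λ₂ + λ₂² = 0` and `λ₁λ₂ + λ₂λ₃ = λ₁λ₃`. In terms of
`x = λ₂/λ₁` and `y = λ₂/λ₃` these say that `x` and `y` are roots of `t² - t + 1`, whose roots are
`e(1/6)` and `e(5/6)`, with `x + y = 1`.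

These relations also force `λ₁, λ₂, λ₃` to be distinct, so each summand of a decomposition
invariant under `B` is spanned by coordinate vectors. Since `A e₁ = -2σ e₀ - σ e₁` and
`A e₂ = e₀ + e₁ + σ e₂`, the summand containing `e₂` contains `e₀ + e₁`; it must then contain `e₁`
(otherwise `e₀` and `e₁` both lie in the other summand), hence `e₀` as well, so it is everything.
-/

open Function

lemma ee_one_sixth : ee (1/6) = (1/2 : ℝ) + (Real.sqrt 3 / 2 : ℝ) * Complex.I := by
  have h : 2 * Real.pi * Complex.I * ((1/6 : ℝ) : ℂ) = (Real.pi / 3 : ℝ) * Complex.I := by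
    push_cast; ring
  rw [ee, h, Complex.exp_mul_I, ← Complex.ofReal_cos, ← Complex.ofReal_sin,
    Real.cos_pi_div_three, Real.sin_pi_div_three]

lemma ee_five_sixths : ee (5/6) = (1/2 : ℝ) - (Real.sqrt 3 / 2 : ℝ) * Complex.I := by
  have h : 2 * Real.pi * Complex.I * ((5/6 : ℝ) : ℂ) =
      2 * Real.pi * Complex.I + ((-(Real.pi / 3) : ℝ) : ℂ) * Complex.I := by
    push_cast; ring
  rw [ee, h, Complex.exp_add, Complex.exp_two_pi_mul_I, one_mul, Complex.exp_mul_I,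
    ← Complex.ofReal_cos, ← Complex.ofReal_sin, Real.cos_neg, Real.sin_neg,
    Real.cos_pi_div_three, Real.sin_pi_div_three]
  push_cast; ring

lemma ee_one_sixth_add_ee_five_sixths : ee (1/6) + ee (5/6) = 1 := by
  rw [ee_one_sixth, ee_five_sixths]; push_cast; ring

lemma ee_one_sixth_mul_ee_five_sixths : ee (1/6) * ee (5/6) = 1 := by
  have h3 : ((Real.sqrt 3 : ℝ) : ℂ) ^ 2 = 3 := by
    rw [← Complex.ofReal_pow, Real.sq_sqrt (by norm_num)]; norm_num
  rw [ee_one_sixth, ee_five_sixths]; push_cast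
  linear_combination (1/4 : ℂ) * h3 - ((Real.sqrt 3 : ℂ) ^ 2 / 4) * Complex.I_sq

lemma sq_sub_self_add_one_eq_mul (z : ℂ) :
    z ^ 2 - z + 1 = (z - ee (1/6)) * (z - ee (5/6)) := by
  linear_combination z * ee_one_sixth_add_ee_five_sixths - ee_one_sixth_mul_ee_five_sixths

lemma roots_and_add_eq_one_iff (x y : ℂ) :
    (x ^ 2 - x + 1 = 0 ∧ y ^ 2 - y + 1 = 0 ∧ x + y = 1) ↔
      (x = ee (1/6) ∧ y = ee (5/6)) ∨ (x = ee (5/6) ∧ y = ee (1/6)) := by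
  have hsum := ee_one_sixth_add_ee_five_sixths
  constructor
  · rintro ⟨hx, -, hxy⟩
    rw [sq_sub_self_add_one_eq_mul, mul_eq_zero, sub_eq_zero, sub_eq_zero] at hx
    rcases hx with rfl | rfl
    · exact Or.inl ⟨rfl, by linear_combination hxy - hsum⟩
    · exact Or.inr ⟨rfl, by linear_combination hxy - hsum⟩
  · rintro (⟨rfl, rfl⟩ | ⟨rfl, rfl⟩) <;>
      simp only [sq_sub_self_add_one_eq_mul, sub_self, mul_zero, zero_mul, true_and]
    · exact hsum
    · linear_combination hsum

section Ratios

variable {K : Type*} [Field K]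

lemma div_sq_sub_div_add_one_eq_zero_iff {a b : K} (ha : a ≠ 0) :
    (b / a) ^ 2 - b / a + 1 = 0 ↔ a ^ 2 - a * b + b ^ 2 = 0 := by
  rw [show (b / a) ^ 2 - b / a + 1 = (a ^ 2 - a * b + b ^ 2) / a ^ 2 by field_simp; ring,
    div_eq_zero_iff, or_iff_left (pow_ne_zero 2 ha)]

lemma div_add_div_same_eq_one_iff {a b c : K} (ha : a ≠ 0) (hc : c ≠ 0) :
    b / a + b / c = 1 ↔ a * b + b * c = a * c := by
  rw [div_add_div _ _ ha hc, div_eq_one_iff_eq (mul_ne_zero ha hc)]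
  constructor <;> intro h <;> linear_combination h

end Ratios

lemma ratio_relations_iff {l1 l2 l3 : ℂ} (hl1 : l1 ≠ 0) (hl3 : l3 ≠ 0) :
    (l1 ^ 2 - l1 * l2 + l2 ^ 2 = 0 ∧ l3 ^ 2 - l3 * l2 + l2 ^ 2 = 0 ∧ l1 * l2 + l2 * l3 = l1 * l3) ↔
      (l2 / l1 = ee (1/6) ∧ l2 / l3 = ee (5/6)) ∨ (l2 / l1 = ee (5/6) ∧ l2 / l3 = ee (1/6)) := by
  rw [← div_sq_sub_div_add_one_eq_zero_iff hl1, ← div_sq_sub_div_add_one_eq_zero_iff hl3,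
    ← div_add_div_same_eq_one_iff hl1 hl3]
  exact roots_and_add_eq_one_iff _ _

lemma injective_of_ratio_relations {l1 l2 l3 : ℂ} (hl2 : l2 ≠ 0)
    (q1 : l1 ^ 2 - l1 * l2 + l2 ^ 2 = 0) (q2 : l3 ^ 2 - l3 * l2 + l2 ^ 2 = 0)
    (q3 : l1 * l2 + l2 * l3 = l1 * l3) : Injective ![l1, l2, l3] := by
  have h12 : l1 ≠ l2 := fun h => hl2 <| pow_eq_zero_iff two_ne_zero |>.1 <| by
    linear_combination q1 - l1 * h
  have h23 : l2 ≠ l3 := fun h => hl2 <| pow_eq_zero_iff two_ne_zero |>.1 <| by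
    linear_combination q2 + l3 * h
  -- with `l3 = l1` the relations give `l2 (l1 + l2) = 0` and `2 l1 l2 = l1²`, which force `l2 = 0`
  have h13 : l1 ≠ l3 := by
    rintro rfl
    refine hl2 (pow_eq_zero_iff three_ne_zero |>.1 ?_)
    linear_combination (l2 - l1 / 3) * q1 + (2 * l2 / 3 - l1 / 3) * q3
  intro i j hij
  fin_cases i <;> fin_cases j <;> simp_all [eq_comm]

section Matrices

variable {R : Type*} [CommRing R]

lemma fin_three_eq_one_iff (a b c d e f g h i : R) :
    !![a, b, c; d, e, f; g, h, i] = 1 ↔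
      a = 1 ∧ b = 0 ∧ c = 0 ∧ d = 0 ∧ e = 1 ∧ f = 0 ∧ g = 0 ∧ h = 0 ∧ i = 1 := by
  simp [one_fin_three, and_assoc]

lemma upperTriangular_fin_three_pow_three (a b c d e f : R) :
    !![a, b, c; 0, d, e; 0, 0, f] ^ 3 =
      !![a ^ 3, b * (a ^ 2 + a * d + d ^ 2), c * (a ^ 2 + a * f + f ^ 2) + b * e * (a + d + f);
        0, d ^ 3, e * (d ^ 2 + d * f + f ^ 2);
        0, 0, f ^ 3] := by
  rw [pow_succ, pow_two, mul_fin_three, mul_fin_three]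
  ext i j; fin_cases i <;> fin_cases j <;> simp <;> ring

end Matrices

section Invariant

variable {n : ℕ} {U V : Submodule ℂ (Fin n → ℂ)}

lemma mulVec_eq_smul_of_isCompl {M : Matrix (Fin n) (Fin n) ℂ} (hUV : IsCompl U V)
    (hU : Invariant M U) (hV : Invariant M V) {u v : Fin n → ℂ} (hu : u ∈ U) (hv : v ∈ V) {c : ℂ}
    (h : M *ᵥ (u + v) = c • (u + v)) : M *ᵥ u = c • u := by
  have hwU : M *ᵥ u - c • u ∈ U := U.sub_mem (hU u hu) (U.smul_mem c hu)
  have hwV : M *ᵥ u - c • u ∈ V := by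
    rw [show M *ᵥ u - c • u = -(M *ᵥ v - c • v) by
      rw [mulVec_add, smul_add] at h; linear_combination (norm := module) h]
    exact V.neg_mem (V.sub_mem (hV v hv) (V.smul_mem c hv))
  exact sub_eq_zero.1 (Submodule.disjoint_def.1 hUV.disjoint _ hwU hwV)

lemma eq_smul_single_of_diagonal_mulVec_eq {l : Fin n → ℂ} (hl : Injective l) {u : Fin n → ℂ}
    {i : Fin n} (h : diagonal l *ᵥ u = l i • u) : u = u i • Pi.single i 1 := by
  ext j
  rcases eq_or_ne j i with rfl | hji
  · simp
  · have hj : (l j - l i) * u j = 0 := by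
      have hcoord := congrFun h j
      simp only [mulVec_diagonal, Pi.smul_apply, smul_eq_mul] at hcoord
      linear_combination hcoord
    simpa [hji] using (mul_eq_zero_iff_left (sub_ne_zero.2 (hl.ne hji))).1 hj

lemma single_mem_or_single_mem_of_isCompl {l : Fin n → ℂ} (hl : Injective l) (hUV : IsCompl U V)
    (hU : Invariant (diagonal l) U) (hV : Invariant (diagonal l) V) (i : Fin n) :
    Pi.single i 1 ∈ U ∨ Pi.single i 1 ∈ V := by
  obtain ⟨u, v, hu, hv, huv⟩ :=
    Submodule.codisjoint_iff_exists_add_eq.1 hUV.codisjoint (Pi.single i 1)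
  have hu_eig : diagonal l *ᵥ u = l i • u := by
    refine mulVec_eq_smul_of_isCompl hUV hU hV hu hv ?_
    rw [huv, diagonal_mulVec_single, ← Pi.single_smul, smul_eq_mul, mul_one]
  obtain ⟨c, rfl⟩ : ∃ c : ℂ, u = c • Pi.single i 1 :=
    ⟨_, eq_smul_single_of_diagonal_mulVec_eq hl hu_eig⟩
  rcases eq_or_ne c 0 with rfl | hc
  · rw [zero_smul, zero_add] at huv
    exact Or.inr (huv ▸ hv)
  · exact Or.inl (by simpa [smul_smul, hc] using U.smul_mem c⁻¹ hu)

lemma eq_top_of_single_mem {W : Submodule ℂ (Fin n → ℂ)} (h : ∀ i, Pi.single i 1 ∈ W) :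
    W = ⊤ := by
  rw [eq_top_iff, ← (Pi.basisFun ℂ (Fin n)).span_eq, Submodule.span_le]
  rintro _ ⟨i, rfl⟩
  simpa using h i

end Invariant

def rhoS (σ : ℂ) : Matrix (Fin 3) (Fin 3) ℂ := !![σ, -2*σ, 1; 0, -σ, 1; 0, 0, σ]

section RhoS

variable {σ : ℂ}

lemma rhoS_sq_eq_one_iff : rhoS σ ^ 2 = 1 ↔ σ ^ 2 = 1 := by
  rw [rhoS, pow_two, mul_fin_three, fin_three_eq_one_iff]
  constructor
  · intro h
    linear_combination h.1
  · intro h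
    refine ⟨?_, ?_, ?_, ?_, ?_, ?_, ?_, ?_, ?_⟩ <;> first | linear_combination h | ring

lemma rhoS_mul_diagonal_pow_three_eq_one_iff {l1 l2 l3 : ℂ} (hσ : σ ^ 2 = 1) (hl2 : l2 ≠ 0)
    (hl3 : l3 ≠ 0) :
    (rhoS σ * diagonal ![l1, l2, l3]) ^ 3 = 1 ↔
      l1 ^ 3 = σ ∧ l2 ^ 3 = -σ ∧ l3 ^ 3 = σ ∧
        l1 ^ 2 - l1 * l2 + l2 ^ 2 = 0 ∧ l3 ^ 2 - l3 * l2 + l2 ^ 2 = 0 ∧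
          l1 * l2 + l2 * l3 = l1 * l3 := by
  have hσ0 : σ ≠ 0 := by rintro rfl; norm_num at hσ
  have hmul : rhoS σ * diagonal ![l1, l2, l3] =
      !![σ * l1, -2 * σ * l2, l3; 0, -σ * l2, l3; 0, 0, σ * l3] := by
    ext i j; fin_cases i <;> fin_cases j <;> simp [rhoS, mul_diagonal]
  rw [hmul, upperTriangular_fin_three_pow_three, fin_three_eq_one_iff]
  constructor
  · rintro ⟨h00, h01, h02, -, h11, h12, -, -, h22⟩
    have q1 : l1 ^ 2 - l1 * l2 + l2 ^ 2 = 0 :=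
      (mul_eq_zero_iff_left (by simp [hσ0, hl2])).1 (by linear_combination h01 :
        (-2 * σ ^ 3 * l2) * (l1 ^ 2 - l1 * l2 + l2 ^ 2) = 0)
    have q2 : l3 ^ 2 - l3 * l2 + l2 ^ 2 = 0 :=
      (mul_eq_zero_iff_left (by simp [hσ0, hl3])).1 (by linear_combination h12 :
        (σ ^ 2 * l3) * (l3 ^ 2 - l3 * l2 + l2 ^ 2) = 0)
    have q3 : l1 * l3 - (l1 * l2 + l2 * l3) = 0 :=
      (mul_eq_zero_iff_left (by simp [hσ0, hl3])).1 (by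
        linear_combination h02 - σ ^ 2 * l3 * q1 - σ ^ 2 * l3 * q2 :
          (σ ^ 2 * l3) * (l1 * l3 - (l1 * l2 + l2 * l3)) = 0)
    refine ⟨?_, ?_, ?_, q1, q2, by linear_combination -q3⟩
    · linear_combination σ * h00 - (σ ^ 2 + 1) * l1 ^ 3 * hσ
    · linear_combination -σ * h11 - (σ ^ 2 + 1) * l2 ^ 3 * hσ
    · linear_combination σ * h22 - (σ ^ 2 + 1) * l3 ^ 3 * hσ
  · rintro ⟨c1, c2, c3, q1, q2, q3⟩
    refine ⟨?_, ?_, ?_, rfl, ?_, ?_, rfl, rfl, ?_⟩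
    · linear_combination σ ^ 3 * c1 + (σ ^ 2 + 1) * hσ
    · linear_combination (-2 * σ ^ 3 * l2) * q1
    · linear_combination σ ^ 2 * l3 * (q1 + q2) - σ ^ 2 * l3 * q3
    · linear_combination -σ ^ 3 * c2 + (σ ^ 2 + 1) * hσ
    · linear_combination σ ^ 2 * l3 * q2
    · linear_combination σ ^ 3 * c3 + (σ ^ 2 + 1) * hσ

lemma single_zero_mem_of_single_one_mem {W : Submodule ℂ (Fin 3 → ℂ)} (hσ : σ ≠ 0)
    (hW : Invariant (rhoS σ) W) (h : Pi.single 1 1 ∈ W) :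
    Pi.single 0 1 ∈ W := by
  have h' : rhoS σ *ᵥ Pi.single 1 1 + σ • Pi.single 1 1 =
      (-2 * σ) • (Pi.single 0 1 : Fin 3 → ℂ) := by
    ext j; fin_cases j <;> simp [rhoS, mulVec_single]
  have hmem := W.smul_mem (-2 * σ)⁻¹ (h' ▸ W.add_mem (hW _ h) (W.smul_mem σ h))
  rwa [smul_smul, inv_mul_cancel₀ (by simpa using hσ), one_smul] at hmem

lemma single_zero_add_single_one_mem_of_single_two_mem {W : Submodule ℂ (Fin 3 → ℂ)}
    (hW : Invariant (rhoS σ) W) (h : Pi.single 2 1 ∈ W) :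
    Pi.single 0 1 + Pi.single 1 1 ∈ W := by
  have h' : Pi.single 0 1 + Pi.single 1 1 =
      rhoS σ *ᵥ Pi.single 2 1 - σ • (Pi.single 2 1 : Fin 3 → ℂ) := by
    ext j; fin_cases j <;> simp [rhoS, mulVec_single]
  exact h' ▸ W.sub_mem (hW _ h) (W.smul_mem σ h)

lemma indecomposable_rhoS_diagonal (hσ : σ ≠ 0) {l : Fin 3 → ℂ} (hl : Injective l) :
    Indecomposable (rhoS σ) (diagonal l) := by
  rintro ⟨U, V, hU, hV, hUV, hAU, hBU, hAV, hBV⟩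
  wlog he2 : Pi.single 2 1 ∈ U generalizing U V
  · have he2V := (single_mem_or_single_mem_of_isCompl hl hUV hBU hBV 2).resolve_left he2
    exact this V U hV hU hUV.symm hAV hBV hAU hBU he2V
  have h01U := single_zero_add_single_one_mem_of_single_two_mem hAU he2
  rcases single_mem_or_single_mem_of_isCompl hl hUV hBU hBV 1 with he1 | he1
  · have he0 := U.sub_mem h01U he1
    rw [add_sub_cancel_right] at he0
    refine hV (top_disjoint.1 (eq_top_of_single_mem (W := U) ?_ ▸ hUV.disjoint))
    intro i; fin_cases i <;> assumption
  · have h01V := V.add_mem (single_zero_mem_of_single_one_mem hσ hAV he1) he1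
    have h01 := Submodule.disjoint_def.1 hUV.disjoint _ h01U h01V
    simpa using congrFun h01 0

end RhoS

/-- with `A = [[σ,−2σ,1],[0,−σ,1],[0,0,σ]]`, `B = diag(λ₁,λ₂,λ₃)` (λᵢ ≠ 0),
`A² = I ∧ (AB)³ = I` holds iff `σ² = 1`, `λ₁³ = σ`, `λ₂³ = −σ`, `λ₃³ = σ` and either
(`λ₂/λ₁ = e(1/6)` and `λ₂/λ₃ = e(5/6)`) or (`λ₂/λ₁ = e(5/6)` and `λ₂/λ₃ = e(1/6)`).
Moreover whenever these conditions hold the pair `(A, B)` is indecomposable. -/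
theorem stmt_6 (l1 l2 l3 σ : ℂ) (hl1 : l1 ≠ 0) (hl2 : l2 ≠ 0) (hl3 : l3 ≠ 0)
    (A : Matrix (Fin 3) (Fin 3) ℂ) (hA : A = !![σ, -2*σ, 1; 0, -σ, 1; 0, 0, σ])
    (B : Matrix (Fin 3) (Fin 3) ℂ) (hB : B = Matrix.diagonal ![l1, l2, l3]) :
    ((A ^ 2 = 1 ∧ (A * B) ^ 3 = 1) ↔
      (σ ^ 2 = 1 ∧ l1 ^ 3 = σ ∧ l2 ^ 3 = -σ ∧ l3 ^ 3 = σ ∧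
        ((l2 / l1 = ee (1/6) ∧ l2 / l3 = ee (5/6)) ∨
          (l2 / l1 = ee (5/6) ∧ l2 / l3 = ee (1/6))))) ∧
      (A ^ 2 = 1 → (A * B) ^ 3 = 1 → Indecomposable A B) := by
  obtain rfl : A = rhoS σ := hA
  subst hB
  refine ⟨?_, fun hA hAB => ?_⟩
  · rw [rhoS_sq_eq_one_iff, ← ratio_relations_iff hl1 hl3]
    exact and_congr_right fun hσ => rhoS_mul_diagonal_pow_three_eq_one_iff hσ hl2 hl3
  · have hσ := rhoS_sq_eq_one_iff.1 hA
    obtain ⟨-, -, -, q1, q2, q3⟩ := (rhoS_mul_diagonal_pow_three_eq_one_iff hσ hl2 hl3).1 hAB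
    exact indecomposable_rhoS_diagonal (by rintro rfl; norm_num at hσ)
      (injective_of_ratio_relations hl2 q1 q2 q3)
end
end

section
/- Let λ₁, λ₂, λ₃ be nonzero complex numbers, σ ∈ ℂ, A = [[−σ, 0, 1],[0, −σ, 1],[0, 0, σ]] and B = diag(λ₁, λ₂, λ₃). Then A² = I and (AB)³ = I hold if and only if σ² = 1, λ₁³ = −σ, λ₂³ = −σ, λ₃³ = σ, λ₁² − λ₁λ₃ + λ₃² = 0 and λ₂² − λ₂λ₃ + λ₃² = 0. Moreover, when these conditions hold, the pair (A, B) is indecomposable if λ₁ ≠ λ₂ and decomposable if λ₁ = λ₂. -/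
noncomputable section
open Matrix

lemma diag3 (a b c : ℂ) : Matrix.diagonal ![a,b,c] = !![a,0,0;0,b,0;0,0,c] := by
  ext i j; fin_cases i <;> fin_cases j <;> simp [Matrix.diagonal, Matrix.vecHead, Matrix.vecTail]

lemma sq3 (σ : ℂ) : (!![-σ, 0, 1; 0, -σ, 1; 0, 0, σ] : Matrix (Fin 3) (Fin 3) ℂ) ^ 2
    = !![σ^2,0,0;0,σ^2,0;0,0,σ^2] := by
  ext i j
  fin_cases i <;> fin_cases j <;>
    simp [pow_succ, Matrix.mul_apply, Fin.sum_univ_three, Matrix.vecHead, Matrix.vecTail] <;> ring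

lemma cube3 (σ l1 l2 l3 : ℂ) :
    (!![-σ, 0, 1; 0, -σ, 1; 0, 0, σ] * !![l1,0,0;0,l2,0;0,0,l3] : Matrix (Fin 3) (Fin 3) ℂ) ^ 3
    = !![-σ^3*l1^3, 0, σ^2*l3*(l1^2 - l1*l3 + l3^2);
         0, -σ^3*l2^3, σ^2*l3*(l2^2 - l2*l3 + l3^2);
         0, 0, σ^3*l3^3] := by
  ext i j
  fin_cases i <;> fin_cases j <;>
    simp [pow_succ, Matrix.mul_apply, Fin.sum_univ_three, Matrix.vecHead, Matrix.vecTail] <;> ring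

lemma iff_part (l1 l2 l3 σ : ℂ) (hl3 : l3 ≠ 0) :
    ((!![-σ, 0, 1; 0, -σ, 1; 0, 0, σ] : Matrix (Fin 3) (Fin 3) ℂ) ^ 2 = 1 ∧
     (!![-σ, 0, 1; 0, -σ, 1; 0, 0, σ] * !![l1,0,0;0,l2,0;0,0,l3] : Matrix (Fin 3) (Fin 3) ℂ) ^ 3 = 1) ↔
      (σ ^ 2 = 1 ∧ l1 ^ 3 = -σ ∧ l2 ^ 3 = -σ ∧ l3 ^ 3 = σ ∧
        l1 ^ 2 - l1 * l3 + l3 ^ 2 = 0 ∧ l2 ^ 2 - l2 * l3 + l3 ^ 2 = 0) := by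
  rw [sq3, cube3, Matrix.one_fin_three]
  constructor
  · rintro ⟨h1, h2⟩
    have hσ : σ ^ 2 = 1 := by
      have := congrFun (congrFun h1 0) 0; simpa using this
    have e00 : -σ^3*l1^3 = 1 := by have := congrFun (congrFun h2 0) 0; simpa using this
    have e11 : -σ^3*l2^3 = 1 := by have := congrFun (congrFun h2 1) 1; simpa using this
    have e22 : σ^3*l3^3 = 1 := by have := congrFun (congrFun h2 2) 2; simpa using this
    have e02 : σ^2*l3*(l1^2 - l1*l3 + l3^2) = 0 := by
      have := congrFun (congrFun h2 0) 2; simpa using this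
    have e12 : σ^2*l3*(l2^2 - l2*l3 + l3^2) = 0 := by
      have := congrFun (congrFun h2 1) 2; simpa using this
    have q1 : l3 * (l1^2 - l1*l3 + l3^2) = 0 := by
      linear_combination e02 - l3*(l1^2 - l1*l3 + l3^2) * hσ
    have q2 : l3 * (l2^2 - l2*l3 + l3^2) = 0 := by
      linear_combination e12 - l3*(l2^2 - l2*l3 + l3^2) * hσ
    refine ⟨hσ, ?_, ?_, ?_, ?_, ?_⟩
    · linear_combination (-σ) * e00 - l1^3*(σ^2+1) * hσ
    · linear_combination (-σ) * e11 - l2^3*(σ^2+1) * hσ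
    · linear_combination σ * e22 - l3^3*(σ^2+1) * hσ
    · exact (mul_eq_zero.1 q1).resolve_left hl3
    · exact (mul_eq_zero.1 q2).resolve_left hl3
  · rintro ⟨hσ, h1, h2, h3, q1, q2⟩
    have a1 : -σ^3*l1^3 = 1 := by linear_combination (-σ^3)*h1 + (σ^2+1)*hσ
    have a2 : -σ^3*l2^3 = 1 := by linear_combination (-σ^3)*h2 + (σ^2+1)*hσ
    have a3 : σ^3*l3^3 = 1 := by linear_combination σ^3*h3 + (σ^2+1)*hσ
    have b1 : σ^2*l3*(l1^2 - l1*l3 + l3^2) = 0 := by linear_combination σ^2*l3*q1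
    have b2 : σ^2*l3*(l2^2 - l2*l3 + l3^2) = 0 := by linear_combination σ^2*l3*q2
    rw [a1, a2, a3, b1, b2, hσ]
    exact ⟨rfl, rfl⟩

lemma key_top (l1 l2 l3 σ : ℂ) (h12 : l1 ≠ l2) (h13 : l1 ≠ l3) (h23 : l2 ≠ l3)
    (W : Submodule ℂ (Fin 3 → ℂ))
    (hWA : Invariant !![-σ,0,1;0,-σ,1;0,0,σ] W) (hWB : Invariant !![l1,0,0;0,l2,0;0,0,l3] W)
    (w : Fin 3 → ℂ) (hw : w ∈ W) (hw2 : w 2 ≠ 0) : W = ⊤ := by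
  set B : Matrix (Fin 3) (Fin 3) ℂ := !![l1,0,0;0,l2,0;0,0,l3] with hBdef
  have hBw : B.mulVec w ∈ W := hWB w hw
  have hBBw : B.mulVec (B.mulVec w) ∈ W := hWB _ hBw
  have hc : (l3-l1)*(l3-l2)*(w 2) ≠ 0 := by
    apply mul_ne_zero (mul_ne_zero _ _) hw2 <;> [skip; skip] <;>
      exact sub_ne_zero.2 (by tauto)
  have hu : ((l3-l1)*(l3-l2)*(w 2)) • (![0,0,1] : Fin 3 → ℂ) ∈ W := by
    have h := W.add_mem (W.sub_mem hBBw (W.smul_mem (l1+l2) hBw)) (W.smul_mem (l1*l2) hw)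
    have heq : ((l3-l1)*(l3-l2)*(w 2)) • (![0,0,1] : Fin 3 → ℂ)
        = B.mulVec (B.mulVec w) - (l1+l2) • B.mulVec w + (l1*l2) • w := by
      funext i; fin_cases i <;>
        simp [hBdef, Matrix.mulVec, dotProduct, Fin.sum_univ_three,
          Matrix.vecHead, Matrix.vecTail] <;> ring
    rw [heq]; exact h
  have he3 : (![0,0,1] : Fin 3 → ℂ) ∈ W := by
    have := W.smul_mem ((l3-l1)*(l3-l2)*(w 2))⁻¹ hu
    rwa [smul_smul, inv_mul_cancel₀ hc, one_smul] at this
  have h110 : (![1,1,0] : Fin 3 → ℂ) ∈ W := by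
    have heq : (![1,1,0] : Fin 3 → ℂ)
        = (!![-σ,0,1;0,-σ,1;0,0,σ]).mulVec ![0,0,1] - σ • ![0,0,1] := by
      funext i; fin_cases i <;>
        simp [Matrix.mulVec, dotProduct, Fin.sum_univ_three,
          Matrix.vecHead, Matrix.vecTail]
    rw [heq]; exact W.sub_mem (hWA _ he3) (W.smul_mem σ he3)
  have he1 : (![1,0,0] : Fin 3 → ℂ) ∈ W := by
    have heq : (![1,0,0] : Fin 3 → ℂ)
        = (l1-l2)⁻¹ • (B.mulVec ![1,1,0] - l2 • ![1,1,0]) := by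
      have h0 : l1 - l2 ≠ 0 := sub_ne_zero.2 h12
      funext i; fin_cases i <;>
        simp [hBdef, Matrix.mulVec, dotProduct, Fin.sum_univ_three,
          Matrix.vecHead, Matrix.vecTail] <;> field_simp
    rw [heq]; exact W.smul_mem _ (W.sub_mem (hWB _ h110) (W.smul_mem l2 h110))
  have he2 : (![0,1,0] : Fin 3 → ℂ) ∈ W := by
    have heq : (![0,1,0] : Fin 3 → ℂ)
        = (l2-l1)⁻¹ • (B.mulVec ![1,1,0] - l1 • ![1,1,0]) := by
      have h0 : l2 - l1 ≠ 0 := sub_ne_zero.2 (Ne.symm h12)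
      funext i; fin_cases i <;>
        simp [hBdef, Matrix.mulVec, dotProduct, Fin.sum_univ_three,
          Matrix.vecHead, Matrix.vecTail] <;> field_simp
    rw [heq]; exact W.smul_mem _ (W.sub_mem (hWB _ h110) (W.smul_mem l1 h110))
  rw [Submodule.eq_top_iff']
  intro v
  have hv : v = v 0 • ![1,0,0] + v 1 • ![0,1,0] + v 2 • ![0,0,1] := by
    funext i; fin_cases i <;> simp
  rw [hv]
  exact W.add_mem (W.add_mem (W.smul_mem _ he1) (W.smul_mem _ he2)) (W.smul_mem _ he3)

lemma decomp_case (l1 l3 σ : ℂ) :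
    Decomposable !![-σ,0,1;0,-σ,1;0,0,σ] !![l1,0,0;0,l1,0;0,0,l3] := by
  refine ⟨Submodule.span ℂ {![1,-1,0]}, Submodule.span ℂ {![1,1,0], ![0,0,1]}, ?_, ?_, ?_, ?_, ?_, ?_, ?_⟩
  · rw [Ne, Submodule.span_singleton_eq_bot]
    intro h
    have := congrFun h 0; simp at this
  · intro h
    have hm : (![0,0,1] : Fin 3 → ℂ) ∈ Submodule.span ℂ {![1,1,0], ![0,0,1]} :=
      Submodule.subset_span (by simp)
    rw [h, Submodule.mem_bot] at hm
    have := congrFun hm 2; simp at this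
  · constructor
    · rw [Submodule.disjoint_def]
      intro v hvU hvV
      rw [Submodule.mem_span_singleton] at hvU
      obtain ⟨c, rfl⟩ := hvU
      rw [Submodule.mem_span_pair] at hvV
      obtain ⟨a, b, hab⟩ := hvV
      have h0 := congrFun hab 0
      have h1 := congrFun hab 1
      simp at h0 h1
      have : c = 0 := by linear_combination (h1 - h0)/2
      rw [this, zero_smul]
    · rw [codisjoint_iff, Submodule.eq_top_iff']
      intro v
      rw [Submodule.mem_sup]
      refine ⟨((v 0 - v 1)/2) • ![1,-1,0], Submodule.smul_mem _ _ (Submodule.subset_span rfl),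
        ((v 0 + v 1)/2) • ![1,1,0] + (v 2) • ![0,0,1], ?_, ?_⟩
      · exact Submodule.add_mem _ (Submodule.smul_mem _ _ (Submodule.subset_span (by simp)))
          (Submodule.smul_mem _ _ (Submodule.subset_span (by simp)))
      · funext i; fin_cases i <;> simp <;> ring
  · intro v hv
    rw [Submodule.mem_span_singleton] at hv ⊢
    obtain ⟨c, rfl⟩ := hv
    exact ⟨-σ*c, by funext i; fin_cases i <;>
      simp [Matrix.mulVec, dotProduct, Fin.sum_univ_three,
        Matrix.vecHead, Matrix.vecTail] <;> ring⟩
  · intro v hv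
    rw [Submodule.mem_span_singleton] at hv ⊢
    obtain ⟨c, rfl⟩ := hv
    exact ⟨l1*c, by funext i; fin_cases i <;>
      simp [Matrix.mulVec, dotProduct, Fin.sum_univ_three,
        Matrix.vecHead, Matrix.vecTail] <;> ring⟩
  · intro v hv
    rw [Submodule.mem_span_pair] at hv ⊢
    obtain ⟨a, b, rfl⟩ := hv
    exact ⟨-σ*a + b, σ*b, by funext i; fin_cases i <;>
      simp [Matrix.mulVec, dotProduct, Fin.sum_univ_three,
        Matrix.vecHead, Matrix.vecTail] <;> ring⟩
  · intro v hv
    rw [Submodule.mem_span_pair] at hv ⊢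
    obtain ⟨a, b, rfl⟩ := hv
    exact ⟨l1*a, l3*b, by funext i; fin_cases i <;>
      simp [Matrix.mulVec, dotProduct, Fin.sum_univ_three,
        Matrix.vecHead, Matrix.vecTail] <;> ring⟩

lemma indecomp_case (l1 l2 l3 σ : ℂ) (h12 : l1 ≠ l2) (h13 : l1 ≠ l3) (h23 : l2 ≠ l3) :
    Indecomposable !![-σ,0,1;0,-σ,1;0,0,σ] !![l1,0,0;0,l2,0;0,0,l3] := by
  rintro ⟨U, V, hU, hV, hcompl, hAU, hBU, hAV, hBV⟩
  have htop : (![0,0,1] : Fin 3 → ℂ) ∈ U ⊔ V := by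
    rw [hcompl.sup_eq_top]; trivial
  rw [Submodule.mem_sup] at htop
  obtain ⟨u, hu, v, hv, huv⟩ := htop
  have h2 : u 2 + v 2 = 1 := by
    have := congrFun huv 2; simpa using this
  by_cases hu2 : u 2 = 0
  · have hv2 : v 2 ≠ 0 := by rw [hu2, zero_add] at h2; rw [h2]; exact one_ne_zero
    have := key_top l1 l2 l3 σ h12 h13 h23 V hAV hBV v hv hv2
    rw [this] at hcompl
    exact hU (hcompl.disjoint.eq_bot_of_le le_top)
  · have := key_top l1 l2 l3 σ h12 h13 h23 U hAU hBU u hu hu2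
    rw [this] at hcompl
    exact hV (hcompl.symm.disjoint.eq_bot_of_le le_top)


/-- with `A = [[−σ,0,1],[0,−σ,1],[0,0,σ]]`, `B = diag(λ₁,λ₂,λ₃)` (λᵢ ≠ 0),
`A² = I ∧ (AB)³ = I` holds iff `σ² = 1`, `λ₁³ = −σ`, `λ₂³ = −σ`, `λ₃³ = σ`,
`λ₁² − λ₁λ₃ + λ₃² = 0` and `λ₂² − λ₂λ₃ + λ₃² = 0`. Moreover, when these conditions
hold, `(A, B)` is indecomposable if `λ₁ ≠ λ₂` and decomposable if `λ₁ = λ₂`. -/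
theorem stmt_7 (l1 l2 l3 σ : ℂ) (hl1 : l1 ≠ 0) (hl2 : l2 ≠ 0) (hl3 : l3 ≠ 0)
    (A : Matrix (Fin 3) (Fin 3) ℂ) (hA : A = !![-σ, 0, 1; 0, -σ, 1; 0, 0, σ])
    (B : Matrix (Fin 3) (Fin 3) ℂ) (hB : B = Matrix.diagonal ![l1, l2, l3]) :
    ((A ^ 2 = 1 ∧ (A * B) ^ 3 = 1) ↔
      (σ ^ 2 = 1 ∧ l1 ^ 3 = -σ ∧ l2 ^ 3 = -σ ∧ l3 ^ 3 = σ ∧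
        l1 ^ 2 - l1 * l3 + l3 ^ 2 = 0 ∧ l2 ^ 2 - l2 * l3 + l3 ^ 2 = 0)) ∧
      (A ^ 2 = 1 → (A * B) ^ 3 = 1 →
        ((l1 ≠ l2 → Indecomposable A B) ∧ (l1 = l2 → Decomposable A B))) := by
  subst hA hB
  rw [diag3]
  refine ⟨iff_part l1 l2 l3 σ hl3, ?_⟩
  intro h1 h2
  obtain ⟨hσ, c1, c2, c3, _, _⟩ := (iff_part l1 l2 l3 σ hl3).1 ⟨h1, h2⟩
  have hσ0 : σ ≠ 0 := by
    intro h; rw [h] at hσ; simp at hσ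
  have h13 : l1 ≠ l3 := by
    intro h
    rw [h, c3] at c1
    exact hσ0 (by linear_combination c1/2)
  have h23 : l2 ≠ l3 := by
    intro h
    rw [h, c3] at c2
    exact hσ0 (by linear_combination c2/2)
  constructor
  · intro hne
    exact indecomp_case l1 l2 l3 σ hne h13 h23
  · intro heq
    rw [← heq]
    exact decomp_case l1 l3 σ
end
end

section
/- Let (A, B) be a pair of matrices in GL₃(ℂ) with A² = I and (AB)³ = I, such that B is diagonalizable, the pair is indecomposable, and there is a two-dimensional subspace W ⊆ ℂ³ invariant under both A and B which is the direct sum of two one-dimensional subspaces each invariant under both A and B. Then (A, B) is simultaneously conjugate to exactly one of the six pairs (A_x, B_x) indexed by x = (x₁, x₂, x₃) ∈ {(1,5,0), (2,0,1), (3,1,2), (4,2,3), (5,3,4), (0,4,5)}, where B_x = diag(e(x₁/6), e(x₂/6), e(x₃/6)), σ = (−1)^{x₃}, and A_x = [[−σ, 0, 1],[0, −σ, 1],[0, 0, σ]]. -/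
/-!
Take common eigenvectors `v₁ ∈ L₁`, `v₂ ∈ L₂` of `A` and `B`, and an eigenvector `v₃ ∉ W` of the
diagonalizable `B`. In the basis `(v₁, v₂, v₃)` the pair becomes
`([[ε₁, 0, a], [0, ε₂, b], [0, 0, c]], diag β)`. Indecomposability forces `a, b ≠ 0`; then `A² = 1`
forces `ε₁ = ε₂ = ε` and `c = -ε`, rescaling `v₁, v₂` makes `a = b = 1`, and indecomposability
again forces `β₀ ≠ β₁`. The entries `(2,2)`, `(0,2)`, `(1,2)` of `(AB)³ = 1` now say
`(εβ₂)³ = -1` and `β_j² - β_j β₂ + β₂² = 0`, so with `ζ = e(1/6)` we get `β₂ = ζᵏ`,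
`ε = -(-1)ᵏ` and `{β₀, β₁} = {ζᵏ⁺¹, ζᵏ⁻¹}`: up to swapping `v₁` and `v₂` this is the pair of
index `k`. The index is unique because `tr B_x = 2ζᵏ`.
-/

noncomputable section
open Matrix

/-- The six triples of Table 1. -/
def t8 : Fin 6 → Fin 3 → ℕ :=
  ![![1, 5, 0], ![2, 0, 1], ![3, 1, 2], ![4, 2, 3], ![5, 3, 4], ![0, 4, 5]]

/-- `B_x = diag(e(x₁/6), e(x₂/6), e(x₃/6))`. -/
def B8 (i : Fin 6) : Matrix (Fin 3) (Fin 3) ℂ :=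
  Matrix.diagonal fun j => ee ((t8 i j : ℝ) / 6)

/-- `σ = (−1)^{x₃}`. -/
def σ8 (i : Fin 6) : ℂ := (-1) ^ (t8 i 2)

/-- `A_x = [[−σ,0,1],[0,−σ,1],[0,0,σ]]`. -/
def A8 (i : Fin 6) : Matrix (Fin 3) (Fin 3) ℂ :=
  !![-σ8 i, 0, 1; 0, -σ8 i, 1; 0, 0, σ8 i]

def ζ₆ : ℂ := Complex.exp (2 * Real.pi * Complex.I / 6)

lemma isPrimitiveRoot_ζ₆ : IsPrimitiveRoot ζ₆ 6 := by
  unfold ζ₆; exact_mod_cast Complex.isPrimitiveRoot_exp 6 (by norm_num)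

lemma ee_div_six (k : ℕ) : ee (k / 6) = ζ₆ ^ k := by
  rw [ζ₆, ← Complex.exp_nat_mul, ee]
  push_cast
  ring_nf

lemma ζ₆_pow_three : ζ₆ ^ 3 = -1 :=
  (isPrimitiveRoot_ζ₆.pow_of_dvd (by norm_num) (by norm_num)).eq_neg_one_of_two_right

lemma ζ₆_add_ζ₆_pow_five : ζ₆ + ζ₆ ^ 5 = 1 := by
  have hζ : ζ₆ + 1 ≠ 0 := fun h => by
    have := isPrimitiveRoot_ζ₆.pow_inj (i := 1) (j := 3) (by norm_num) (by norm_num)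
      (by rw [ζ₆_pow_three]; linear_combination h)
    omega
  apply mul_left_cancel₀ hζ
  linear_combination (ζ₆ ^ 2 + ζ₆ ^ 3 - 1) * ζ₆_pow_three

lemma eq_or_eq_of_sq_sub_mul_add_sq_eq_zero {x y : ℂ} (h : x ^ 2 - x * y + y ^ 2 = 0) :
    x = ζ₆ * y ∨ x = ζ₆ ^ 5 * y := by
  have : (x - ζ₆ * y) * (x - ζ₆ ^ 5 * y) = 0 := by
    linear_combination h - x * y * ζ₆_add_ζ₆_pow_five + y ^ 2 * isPrimitiveRoot_ζ₆.pow_eq_one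
  rcases mul_eq_zero.1 this with h | h
  exacts [.inl (sub_eq_zero.1 h), .inr (sub_eq_zero.1 h)]

section SimConj

variable {n : ℕ} {U : Submodule ℂ (Fin n → ℂ)} {A B A' B' A'' B'' P X Y : Matrix (Fin n) (Fin n) ℂ}

lemma SimConj.refl (A B : Matrix (Fin n) (Fin n) ℂ) : SimConj A B A B :=
  ⟨1, isUnit_one, SemiconjBy.one_left A, SemiconjBy.one_left B⟩

lemma SimConj.symm (h : SimConj A B A' B') : SimConj A' B' A B := by
  obtain ⟨P, ⟨u, rfl⟩, hA, hB⟩ := h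
  exact ⟨↑u⁻¹, u⁻¹.isUnit, SemiconjBy.units_inv_symm_left hA, SemiconjBy.units_inv_symm_left hB⟩

lemma SimConj.trans (h : SimConj A B A' B') (h' : SimConj A' B' A'' B'') : SimConj A B A'' B'' := by
  obtain ⟨P, hP, hA, hB⟩ := h
  obtain ⟨Q, hQ, hA', hB'⟩ := h'
  exact ⟨Q * P, hQ.mul hP, SemiconjBy.mul_left hA' hA, SemiconjBy.mul_left hB' hB⟩

lemma pow_eq_one_of_semiconjBy (hP : IsUnit P) (h : SemiconjBy P X Y) {k : ℕ} (hX : X ^ k = 1) :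
    Y ^ k = 1 := by
  have := h.pow_right k
  rw [hX, SemiconjBy, mul_one] at this
  exact (hP.mul_eq_right).1 this.symm

lemma trace_eq_of_semiconjBy (hP : IsUnit P) (h : SemiconjBy P X Y) : Y.trace = X.trace := by
  obtain ⟨u, rfl⟩ := hP
  rw [(Units.eq_mul_inv_iff_mul_eq u).2 h.eq.symm, trace_units_conj]

lemma Invariant.comap (hU : Invariant Y U) (h : SemiconjBy P X Y) :
    Invariant X (U.comap (mulVecLin P)) := by
  intro v hv
  simpa [Submodule.mem_comap, mulVec_mulVec, h.eq] using hU _ hv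

lemma Decomposable.of_simConj (h : SimConj A B A' B') (hd : Decomposable A' B') :
    Decomposable A B := by
  obtain ⟨P, hP, hA, hB⟩ := h
  obtain ⟨U, V, hU, hV, hUV, hAU, hBU, hAV, hBV⟩ := hd
  have hbij : Function.Bijective (mulVecLin P) :=
    ⟨mulVec_injective_iff_isUnit.2 hP, mulVec_surjective_iff_isUnit.2 hP⟩
  set φ := (Submodule.orderIsoMapComapOfBijective _ hbij).symm
  refine ⟨φ U, φ V, ?_, ?_, φ.isCompl hUV, hAU.comap hA, hBU.comap hB, hAV.comap hA, hBV.comap hB⟩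
  · simpa using hU
  · simpa using hV

end SimConj

section Block

variable {n : ℕ} {A B : Matrix (Fin n) (Fin n) ℂ}

def IsBlockDiagonalOn (s : Set (Fin n)) (M : Matrix (Fin n) (Fin n) ℂ) : Prop :=
  ∀ k l, (k ∈ s ↔ l ∉ s) → M k l = 0

lemma isBlockDiagonalOn_diagonal (s : Set (Fin n)) (d : Fin n → ℂ) :
    IsBlockDiagonalOn s (diagonal d) :=
  fun _ _ h => diagonal_apply_ne d fun hkl => by subst hkl; tauto

lemma invariant_pi_bot {M : Matrix (Fin n) (Fin n) ℂ} {s : Set (Fin n)}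
    (hM : ∀ k ∈ s, ∀ l ∉ s, M k l = 0) :
    Invariant M (Submodule.pi s fun _ => (⊥ : Submodule ℂ ℂ)) := by
  intro x hx k hk
  simp only [Submodule.mem_pi, Submodule.mem_bot, mulVec, dotProduct] at hx ⊢
  refine Finset.sum_eq_zero fun l _ => ?_
  by_cases hl : l ∈ s
  · simp [hx l hl]
  · simp [hM k hk l hl]

lemma isCompl_pi_bot (s : Set (Fin n)) :
    IsCompl (Submodule.pi s fun _ => (⊥ : Submodule ℂ ℂ)) (Submodule.pi sᶜ fun _ => ⊥) := by
  constructor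
  · rw [Submodule.disjoint_def]
    intro x hx hx'
    simp only [Submodule.mem_pi, Submodule.mem_bot, Set.mem_compl_iff] at hx hx'
    funext k
    by_cases hk : k ∈ s
    exacts [hx k hk, hx' k hk]
  · rw [codisjoint_iff, eq_top_iff]
    intro x _
    refine Submodule.mem_sup.2 ⟨sᶜ.indicator x, ?_, s.indicator x, ?_, s.indicator_compl_add_self x⟩
      <;> intro k hk <;> simp_all

lemma pi_bot_ne_bot {s : Set (Fin n)} {j : Fin n} (hj : j ∉ s) :
    (Submodule.pi s fun _ => (⊥ : Submodule ℂ ℂ)) ≠ ⊥ := by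
  rw [Submodule.ne_bot_iff]
  refine ⟨Pi.single j 1, fun k hk => ?_, by simp⟩
  simp [show k ≠ j by rintro rfl; exact hj hk]

lemma decomposable_of_isBlockDiagonalOn (s : Set (Fin n)) {i j : Fin n} (hi : i ∈ s)
    (hj : j ∉ s) (hA : IsBlockDiagonalOn s A) (hB : IsBlockDiagonalOn s B) : Decomposable A B := by
  have inv_s (M : Matrix (Fin n) (Fin n) ℂ) (hM : IsBlockDiagonalOn s M) :=
    invariant_pi_bot (s := s) fun k hk l hl => hM k l (by tauto)
  have inv_sc (M : Matrix (Fin n) (Fin n) ℂ) (hM : IsBlockDiagonalOn s M) :=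
    invariant_pi_bot (s := sᶜ) fun k hk l hl => hM k l (by simp_all)
  exact ⟨_, _, pi_bot_ne_bot hj, pi_bot_ne_bot (s := sᶜ) (not_not.2 hi), isCompl_pi_bot s,
    inv_s A hA, inv_s B hB, inv_sc A hA, inv_sc B hB⟩

end Block

lemma decomposable_upper_zero_02 (ε₁ ε₂ b c : ℂ) (β : Fin 3 → ℂ) :
    Decomposable !![ε₁, 0, 0; 0, ε₂, b; 0, 0, c] (diagonal β) :=
  decomposable_of_isBlockDiagonalOn {0} (i := 0) (j := 1) rfl (by simp)
    (by intro k l; fin_cases k <;> fin_cases l <;> simp) (isBlockDiagonalOn_diagonal _ β)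

lemma decomposable_upper_zero_12 (ε₁ ε₂ a c : ℂ) (β : Fin 3 → ℂ) :
    Decomposable !![ε₁, 0, a; 0, ε₂, 0; 0, 0, c] (diagonal β) :=
  decomposable_of_isBlockDiagonalOn {1} (i := 1) (j := 0) rfl (by simp)
    (by intro k l; fin_cases k <;> fin_cases l <;> simp) (isBlockDiagonalOn_diagonal _ β)

def normalA (ε : ℂ) : Matrix (Fin 3) (Fin 3) ℂ := !![ε, 0, 1; 0, ε, 1; 0, 0, -ε]

lemma decomposable_normalA_of_eq (ε : ℂ) {β : Fin 3 → ℂ} (h : β 0 = β 1) :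
    Decomposable (normalA ε) (diagonal β) := by
  -- in the basis `(e₀ - e₁, e₀ + e₁, e₂)` the line spanned by `e₀ - e₁` splits off
  let F : Matrix (Fin 3) (Fin 3) ℂ := !![1, 1, 0; -1, 1, 0; 0, 0, 1]
  have hF : IsUnit F := by
    rw [isUnit_iff_isUnit_det, det_fin_three]
    simp [F]
  have hconj : SimConj !![ε, 0, 0; 0, ε, 1; 0, 0, -ε] (diagonal β) (normalA ε) (diagonal β) := by
    refine ⟨F, hF, ?_, ?_⟩ <;> ext k l <;> fin_cases k <;> fin_cases l <;>
      simp [F, normalA, mul_apply, Fin.sum_univ_three, h]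
  exact Decomposable.of_simConj hconj.symm (decomposable_upper_zero_02 _ _ _ _ _)

lemma eq_of_upper_sq_eq_one {ε₁ ε₂ a b c : ℂ} (h : !![ε₁, 0, a; 0, ε₂, b; 0, 0, c] ^ 2 = 1)
    (ha : a ≠ 0) (hb : b ≠ 0) : ε₂ = ε₁ ∧ c = -ε₁ := by
  have hsq : !![ε₁, 0, a; 0, ε₂, b; 0, 0, c] ^ 2 =
      !![ε₁ ^ 2, 0, a * (ε₁ + c); 0, ε₂ ^ 2, b * (ε₂ + c); 0, 0, c ^ 2] := by
    ext k l
    fin_cases k <;> fin_cases l <;> simp [sq, mul_apply, Fin.sum_univ_three] <;> ring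
  rw [hsq] at h
  have h02 : a * (ε₁ + c) = 0 := by simpa using congrFun (congrFun h 0) 2
  have h12 : b * (ε₂ + c) = 0 := by simpa using congrFun (congrFun h 1) 2
  have hc := (mul_eq_zero.1 h02).resolve_left ha
  have hε := (mul_eq_zero.1 h12).resolve_left hb
  exact ⟨by linear_combination hε - hc, by linear_combination hc⟩

lemma simConj_upper_normalA {ε a b : ℂ} (ha : a ≠ 0) (hb : b ≠ 0) (β : Fin 3 → ℂ) :
    SimConj !![ε, 0, a; 0, ε, b; 0, 0, -ε] (diagonal β) (normalA ε) (diagonal β) := by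
  refine ⟨diagonal ![a⁻¹, b⁻¹, 1], ?_, ?_, ?_⟩
  · simp [isUnit_iff_isUnit_det, Fin.prod_univ_three, ha, hb]
  · ext k l; fin_cases k <;> fin_cases l <;>
      simp [normalA, mul_apply, Fin.sum_univ_three, ha, hb, mul_comm]
  · exact (diagonal_mul_diagonal' _ _).trans ((congrArg diagonal (mul_comm _ _)).trans
      (diagonal_mul_diagonal' _ _).symm)

lemma SimConj.exists_normalA {A B : Matrix (Fin 3) (Fin 3) ℂ} {ε₁ ε₂ a b c : ℂ} {β : Fin 3 → ℂ}
    (h : SimConj A B !![ε₁, 0, a; 0, ε₂, b; 0, 0, c] (diagonal β)) (hA : A ^ 2 = 1)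
    (hind : Indecomposable A B) : ∃ ε, SimConj A B (normalA ε) (diagonal β) := by
  have ha : a ≠ 0 := by
    rintro rfl
    exact hind (Decomposable.of_simConj h (decomposable_upper_zero_02 _ _ _ _ _))
  have hb : b ≠ 0 := by
    rintro rfl
    exact hind (Decomposable.of_simConj h (decomposable_upper_zero_12 _ _ _ _ _))
  obtain ⟨P, hP, hPA, -⟩ := id h
  obtain ⟨rfl, rfl⟩ := eq_of_upper_sq_eq_one (pow_eq_one_of_semiconjBy hP hPA hA) ha hb
  exact ⟨_, h.trans (simConj_upper_normalA ha hb β)⟩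

lemma normalA_scalar_relations {ε : ℂ} {β : Fin 3 → ℂ} (hA : normalA ε ^ 2 = 1)
    (hAB : (normalA ε * diagonal β) ^ 3 = 1) :
    ε ^ 2 = 1 ∧ (ε * β 2) ^ 3 = -1 ∧
      β 0 ^ 2 - β 0 * β 2 + β 2 ^ 2 = 0 ∧ β 1 ^ 2 - β 1 * β 2 + β 2 ^ 2 = 0 := by
  have hM : normalA ε * diagonal β = !![ε * β 0, 0, β 2; 0, ε * β 1, β 2; 0, 0, -(ε * β 2)] := by
    ext k l
    fin_cases k <;> fin_cases l <;> simp [normalA]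
  have hcube : !![ε * β 0, 0, β 2; 0, ε * β 1, β 2; 0, 0, -(ε * β 2)] ^ 3 =
      !![(ε * β 0) ^ 3, 0, ε ^ 2 * β 2 * (β 0 ^ 2 - β 0 * β 2 + β 2 ^ 2);
        0, (ε * β 1) ^ 3, ε ^ 2 * β 2 * (β 1 ^ 2 - β 1 * β 2 + β 2 ^ 2);
        0, 0, -(ε * β 2) ^ 3] := by
    ext k l
    fin_cases k <;> fin_cases l <;> simp [pow_succ, mul_apply, Fin.sum_univ_three] <;> ring
  rw [hM, hcube] at hAB
  have hε : ε ^ 2 = 1 := by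
    simpa [normalA, sq, mul_apply, Fin.sum_univ_three] using congrFun (congrFun hA 0) 0
  have m22 : -(ε * β 2) ^ 3 = 1 := by simpa using congrFun (congrFun hAB 2) 2
  have h3 : (ε * β 2) ^ 3 = -1 := by linear_combination -m22
  have hβ2 : β 2 ≠ 0 := by rintro h; simp [h] at h3
  have m02 : ε ^ 2 * β 2 * (β 0 ^ 2 - β 0 * β 2 + β 2 ^ 2) = 0 := by
    simpa using congrFun (congrFun hAB 0) 2
  have m12 : ε ^ 2 * β 2 * (β 1 ^ 2 - β 1 * β 2 + β 2 ^ 2) = 0 := by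
    simpa using congrFun (congrFun hAB 1) 2
  rw [hε, one_mul] at m02 m12
  exact ⟨hε, h3, (mul_eq_zero.1 m02).resolve_left hβ2, (mul_eq_zero.1 m12).resolve_left hβ2⟩

lemma A8_eq (i : Fin 6) : A8 i = normalA (-(-1) ^ (i : ℕ)) := by
  have hσ : σ8 i = (-1) ^ (i : ℕ) := by fin_cases i <;> rfl
  simp [A8, normalA, hσ]

lemma B8_eq (i : Fin 6) :
    B8 i = diagonal ![ζ₆ ^ ((i : ℕ) + 1), ζ₆ ^ ((i : ℕ) + 5), ζ₆ ^ (i : ℕ)] := by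
  have ht : t8 i = ![((i : ℕ) + 1) % 6, ((i : ℕ) + 5) % 6, i] := by
    fin_cases i <;> decide
  have hmod (m : ℕ) : ζ₆ ^ (m % 6) = ζ₆ ^ m := by
    rw [isPrimitiveRoot_ζ₆.eq_orderOf, pow_mod_orderOf]
  simp only [B8, ee_div_six, ht]
  congr 1
  funext j
  fin_cases j <;> simp [hmod]

lemma simConj_normalA_swap (ε : ℂ) (β : Fin 3 → ℂ) :
    SimConj (normalA ε) (diagonal β) (normalA ε) (diagonal ![β 1, β 0, β 2]) := by
  let S : Matrix (Fin 3) (Fin 3) ℂ := !![0, 1, 0; 1, 0, 0; 0, 0, 1]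
  have hS : S * S = 1 := by
    ext k l; fin_cases k <;> fin_cases l <;> simp [S, mul_apply, Fin.sum_univ_three]
  refine ⟨S, .of_mul_eq_one S hS, ?_, ?_⟩ <;>
    ext k l <;> fin_cases k <;> fin_cases l <;> simp [S, normalA, mul_apply, Fin.sum_univ_three]

lemma exists_simConj_A8_B8 {ε : ℂ} {β : Fin 3 → ℂ} (hε : ε ^ 2 = 1) (h3 : (ε * β 2) ^ 3 = -1)
    (h0 : β 0 ^ 2 - β 0 * β 2 + β 2 ^ 2 = 0) (h1 : β 1 ^ 2 - β 1 * β 2 + β 2 ^ 2 = 0)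
    (h01 : β 0 ≠ β 1) : ∃ i, SimConj (normalA ε) (diagonal β) (A8 i) (B8 i) := by
  obtain ⟨k, hk, hβ2⟩ := isPrimitiveRoot_ζ₆.eq_pow_of_pow_eq_one (ξ := β 2) <| by
    linear_combination ((ε * β 2) ^ 3 - 1) * h3 - β 2 ^ 6 * (ε ^ 4 + ε ^ 2 + 1) * hε
  have hsign : ε = -(-1) ^ k := by
    have hs : ((-1 : ℂ) ^ k) ^ 2 = 1 := by rw [← pow_mul, mul_comm, pow_mul, neg_one_sq, one_pow]
    have hβ3 : β 2 ^ 3 = (-1) ^ k := by rw [← hβ2, ← pow_mul, mul_comm, pow_mul, ζ₆_pow_three]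
    rw [mul_pow, hβ3] at h3
    linear_combination (-1) ^ k * h3 - ε ^ 3 * hs - ε * hε
  have hβ (j : Fin 3) (hj : β j ^ 2 - β j * β 2 + β 2 ^ 2 = 0) :
      β j = ζ₆ ^ (k + 1) ∨ β j = ζ₆ ^ (k + 5) := by
    rcases eq_or_eq_of_sq_sub_mul_add_sq_eq_zero hj with h | h <;> rw [h, ← hβ2]
    exacts [.inl (by ring), .inr (by ring)]
  refine ⟨⟨k, hk⟩, ?_⟩
  rw [A8_eq, B8_eq, ← hsign, hβ2]
  rcases hβ 0 h0 with h0' | h0' <;> rcases hβ 1 h1 with h1' | h1'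
  · exact absurd (h0'.trans h1'.symm) h01
  · convert SimConj.refl (normalA ε) (diagonal β) using 2
    funext j; fin_cases j <;> simp [h0', h1']
  · convert simConj_normalA_swap ε β using 2
    funext j; fin_cases j <;> simp [h0', h1']
  · exact absurd (h0'.trans h1'.symm) h01

lemma trace_B8 (i : Fin 6) : (B8 i).trace = 2 * ζ₆ ^ (i : ℕ) := by
  simp only [B8_eq, trace_diagonal, Fin.sum_univ_three, Nat.succ_eq_add_one, Nat.reduceAdd,
    Fin.isValue, cons_val_zero, cons_val_one, cons_val]
  linear_combination ζ₆ ^ (i : ℕ) * ζ₆_add_ζ₆_pow_five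

lemma eq_of_simConj_A8_B8 {A B : Matrix (Fin 3) (Fin 3) ℂ} {i j : Fin 6}
    (hi : SimConj A B (A8 i) (B8 i)) (hj : SimConj A B (A8 j) (B8 j)) : i = j := by
  obtain ⟨P, hP, -, hPB⟩ := hi
  obtain ⟨Q, hQ, -, hQB⟩ := hj
  have htr := (trace_eq_of_semiconjBy hP hPB).trans (trace_eq_of_semiconjBy hQ hQB).symm
  rw [trace_B8, trace_B8] at htr
  exact Fin.ext (isPrimitiveRoot_ζ₆.pow_inj i.isLt j.isLt (mul_left_cancel₀ two_ne_zero htr))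

section Eigenvectors

variable {n : ℕ}

lemma exists_eigenvector_of_finrank_eq_one {L : Submodule ℂ (Fin n → ℂ)}
    (hL : Module.finrank ℂ L = 1) :
    ∃ v ∈ L, v ≠ 0 ∧ ∀ M : Matrix (Fin n) (Fin n) ℂ, Invariant M L → ∃ c : ℂ, M *ᵥ v = c • v := by
  obtain ⟨v, hv0, hv⟩ := finrank_eq_one_iff'.1 hL
  refine ⟨v, v.2, by simpa using hv0, fun M hM => ?_⟩
  obtain ⟨c, hc⟩ := hv ⟨M *ᵥ v, hM v v.2⟩
  exact ⟨c, (congrArg Subtype.val hc).symm⟩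

lemma IsDiagonalizable.exists_eigenvector_not_mem {B : Matrix (Fin n) (Fin n) ℂ}
    (hB : IsDiagonalizable B) {W : Submodule ℂ (Fin n → ℂ)} (hW : W ≠ ⊤) :
    ∃ v ∉ W, ∃ β : ℂ, B *ᵥ v = β • v := by
  obtain ⟨P, ⟨u, rfl⟩, d, hd⟩ := hB
  set C : Matrix (Fin n) (Fin n) ℂ := ↑u⁻¹
  have hcol (j : Fin n) : B *ᵥ C.col j = d j • C.col j := by
    rw [← mulVec_single_one, mulVec_mulVec, ← (SemiconjBy.units_inv_symm_left hd).eq,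
      ← mulVec_mulVec, diagonal_mulVec_single, ← mulVec_smul]
    congr 1
    ext
    simp [Pi.single_apply]
  have hC : LinearMap.range (mulVecLin C) = ⊤ :=
    LinearMap.range_eq_top.2 (mulVec_surjective_iff_isUnit.2 u⁻¹.isUnit)
  by_contra! h
  apply hW
  rw [eq_top_iff, ← hC, range_mulVecLin, Submodule.span_le]
  rintro _ ⟨j, rfl⟩
  by_contra hj
  exact h _ hj _ (hcol j)

end Eigenvectors

lemma linearIndependent_pair_of_inf_eq_bot {K V : Type*} [Field K] [AddCommGroup V] [Module K V]
    {L₁ L₂ : Submodule K V} (h : L₁ ⊓ L₂ = ⊥) {v₁ v₂ : V} (hv₁ : v₁ ∈ L₁) (hv₂ : v₂ ∈ L₂)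
    (hv₁0 : v₁ ≠ 0) (hv₂0 : v₂ ≠ 0) : LinearIndependent K ![v₁, v₂] := by
  refine (LinearIndependent.pair_iff' hv₁0).2 fun a ha => hv₂0 ?_
  have : v₂ ∈ L₁ ⊓ L₂ := ⟨ha ▸ L₁.smul_mem a hv₁, hv₂⟩
  simpa [h] using this

section Basis

variable {n : ℕ} (b : Module.Basis (Fin n) ℂ (Fin n → ℂ))

lemma simConj_toMatrix (A B : Matrix (Fin n) (Fin n) ℂ) :
    SimConj A B (LinearMap.toMatrix b b (toLin' A)) (LinearMap.toMatrix b b (toLin' B)) := by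
  let e := Pi.basisFun ℂ (Fin n)
  have key (M : Matrix (Fin n) (Fin n) ℂ) :
      b.toMatrix e * M = LinearMap.toMatrix b b (toLin' M) * b.toMatrix e := by
    rw [← basis_toMatrix_mul_linearMap_toMatrix_mul_basis_toMatrix (b := b) (b' := e) (c := b)
      (c' := e), LinearMap.toMatrix_eq_toMatrix', LinearMap.toMatrix'_toLin', mul_assoc,
      e.toMatrix_mul_toMatrix_flip, mul_one]
  exact ⟨b.toMatrix e, .of_mul_eq_one _ (b.toMatrix_mul_toMatrix_flip e), key A, key B⟩

lemma toMatrix_toLin'_apply_of_mulVec_eq_smul {M : Matrix (Fin n) (Fin n) ℂ} {j : Fin n} {c : ℂ}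
    (h : M *ᵥ b j = c • b j) (i : Fin n) :
    LinearMap.toMatrix b b (toLin' M) i j = if i = j then c else 0 := by
  rw [LinearMap.toMatrix_apply, toLin'_apply, h, map_smul, b.repr_self]
  simp [Finsupp.single_apply, eq_comm]

end Basis

lemma simConj_upper_of_basis {A B : Matrix (Fin 3) (Fin 3) ℂ}
    (bs : Module.Basis (Fin 3) ℂ (Fin 3 → ℂ)) {ε₁ ε₂ β₁ β₂ β₃ : ℂ}
    (hA₀ : A *ᵥ bs 0 = ε₁ • bs 0) (hA₁ : A *ᵥ bs 1 = ε₂ • bs 1) (hB₀ : B *ᵥ bs 0 = β₁ • bs 0)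
    (hB₁ : B *ᵥ bs 1 = β₂ • bs 1) (hB₂ : B *ᵥ bs 2 = β₃ • bs 2) :
    ∃ a b c : ℂ, SimConj A B !![ε₁, 0, a; 0, ε₂, b; 0, 0, c] (diagonal ![β₁, β₂, β₃]) := by
  have cA₀ := toMatrix_toLin'_apply_of_mulVec_eq_smul bs hA₀
  have cA₁ := toMatrix_toLin'_apply_of_mulVec_eq_smul bs hA₁
  have cB₀ := toMatrix_toLin'_apply_of_mulVec_eq_smul bs hB₀
  have cB₁ := toMatrix_toLin'_apply_of_mulVec_eq_smul bs hB₁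
  have cB₂ := toMatrix_toLin'_apply_of_mulVec_eq_smul bs hB₂
  have h := simConj_toMatrix bs A B
  set MA := LinearMap.toMatrix bs bs (toLin' A)
  refine ⟨MA 0 2, MA 1 2, MA 2 2, ?_⟩
  convert h using 1 <;> ext i j <;> fin_cases i <;> fin_cases j <;>
    simp [cA₀, cA₁, cB₀, cB₁, cB₂]

lemma exists_simConj_upper {A B : Matrix (Fin 3) (Fin 3) ℂ} (hdiag : IsDiagonalizable B)
    {W L₁ L₂ : Submodule ℂ (Fin 3 → ℂ)} (hW : Module.finrank ℂ W = 2)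
    (hL₁ : Module.finrank ℂ L₁ = 1) (hAL₁ : Invariant A L₁) (hBL₁ : Invariant B L₁)
    (hL₂ : Module.finrank ℂ L₂ = 1) (hAL₂ : Invariant A L₂) (hBL₂ : Invariant B L₂)
    (hL₁₂ : L₁ ⊓ L₂ = ⊥) (hL₁₂W : L₁ ⊔ L₂ = W) :
    ∃ (ε₁ ε₂ a b c : ℂ) (β : Fin 3 → ℂ),
      SimConj A B !![ε₁, 0, a; 0, ε₂, b; 0, 0, c] (diagonal β) := by
  obtain ⟨v₁, hv₁L, hv₁0, hv₁⟩ := exists_eigenvector_of_finrank_eq_one hL₁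
  obtain ⟨v₂, hv₂L, hv₂0, hv₂⟩ := exists_eigenvector_of_finrank_eq_one hL₂
  obtain ⟨ε₁, hAv₁⟩ := hv₁ A hAL₁
  obtain ⟨β₁, hBv₁⟩ := hv₁ B hBL₁
  obtain ⟨ε₂, hAv₂⟩ := hv₂ A hAL₂
  obtain ⟨β₂, hBv₂⟩ := hv₂ B hBL₂
  have hWtop : W ≠ ⊤ := by
    rintro rfl
    simp at hW
  obtain ⟨v₃, hv₃W, β₃, hBv₃⟩ := hdiag.exists_eigenvector_not_mem hWtop
  have hspan : Submodule.span ℂ (Set.range ![v₁, v₂]) ≤ W := by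
    rw [Submodule.span_le, ← hL₁₂W]
    rintro _ ⟨j, rfl⟩
    fin_cases j
    exacts [Submodule.mem_sup_left hv₁L, Submodule.mem_sup_right hv₂L]
  have hli : LinearIndependent ℂ (Fin.snoc ![v₁, v₂] v₃ : Fin 3 → _) :=
    (linearIndependent_pair_of_inf_eq_bot hL₁₂ hv₁L hv₂L hv₁0 hv₂0).finSnoc
      fun h => hv₃W (hspan h)
  let bs := basisOfLinearIndependentOfCardEqFinrank hli (by simp)
  obtain ⟨a, b, c, h⟩ := simConj_upper_of_basis bs (by simpa [bs] using hAv₁)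
    (by simpa [bs] using hAv₂) (by simpa [bs] using hBv₁) (by simpa [bs] using hBv₂)
    (by simpa [bs] using hBv₃)
  exact ⟨ε₁, ε₂, a, b, c, _, h⟩

/-- an indecomposable pair `(A, B)` with `A² = I`, `(AB)³ = I`,
`B` diagonalizable, possessing a two-dimensional invariant subspace which is the
direct sum of two invariant lines, is simultaneously conjugate to exactly one of
the six pairs `(A_x, B_x)` of Table 1. -/
theorem stmt_8 (A B : Matrix (Fin 3) (Fin 3) ℂ)
    (hA2 : A ^ 2 = 1) (hAB3 : (A * B) ^ 3 = 1)
    (hdiag : IsDiagonalizable B) (hindec : Indecomposable A B)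
    (hW : ∃ W L1 L2 : Submodule ℂ (Fin 3 → ℂ),
      Module.finrank ℂ W = 2 ∧ Invariant A W ∧ Invariant B W ∧
      Module.finrank ℂ L1 = 1 ∧ Invariant A L1 ∧ Invariant B L1 ∧
      Module.finrank ℂ L2 = 1 ∧ Invariant A L2 ∧ Invariant B L2 ∧
      L1 ⊓ L2 = ⊥ ∧ L1 ⊔ L2 = W) :
    ∃! i : Fin 6, SimConj A B (A8 i) (B8 i) := by
  obtain ⟨W, L₁, L₂, hW₂, -, -, hL₁, hAL₁, hBL₁, hL₂, hAL₂, hBL₂, hL₁₂, hL₁₂W⟩ := hW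
  obtain ⟨ε₁, ε₂, a, b, c, β, hupper⟩ :=
    exists_simConj_upper hdiag hW₂ hL₁ hAL₁ hBL₁ hL₂ hAL₂ hBL₂ hL₁₂ hL₁₂W
  obtain ⟨ε, hnormal⟩ := hupper.exists_normalA hA2 hindec
  have hβ : β 0 ≠ β 1 := fun h =>
    hindec (Decomposable.of_simConj hnormal (decomposable_normalA_of_eq ε h))
  obtain ⟨P, hP, hPA, hPB⟩ := hnormal
  obtain ⟨hε, h3, h0, h1⟩ := normalA_scalar_relations (pow_eq_one_of_semiconjBy hP hPA hA2)
    (pow_eq_one_of_semiconjBy hP (SemiconjBy.mul_right hPA hPB) hAB3)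
  obtain ⟨i, hi⟩ := exists_simConj_A8_B8 hε h3 h0 h1 hβ
  have hAi : SimConj A B (A8 i) (B8 i) := SimConj.trans ⟨P, hP, hPA, hPB⟩ hi
  exact ⟨i, hAi, fun j hj => eq_of_simConj_A8_B8 hj hAi⟩
end
end

section
/- Let G be a finite-index normal subgroup of SL(2,ℤ), let f be a weight-2 cusp form for G, let γ ∈ SL(2,ℤ), and let g be a weight-2 cusp form for G with g = f ∣[2] γ (such g exists since G is normal in SL(2,ℤ)). Then the improper integrals defining the Eichler integrals u_f and u_g converge absolutely for every τ ∈ ℍ, and there exists a constant c ∈ ℂ such that u_f(γ·τ) = u_g(τ) + c for all τ ∈ ℍ, where γ·τ = (aτ+b)/(cτ+d) denotes the Möbius action of γ = [[a,b],[c,d]]. -/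
/-!
A cusp form for a finite-index subgroup `G` is periodic (some power of `T` lies in `G`), hence
decays exponentially at `i∞`, so the vertical integrals converge. Cauchy's theorem on rectangles
whose top edge goes off to `i∞` shows that `u_f τ - u_f τ₀` is the integral of `f` along the
horizontal-then-vertical path from `τ₀` to `τ`; thus `u_f` is a primitive of `f`. By the chain
rule, `τ ↦ u_f (γ • τ)` has derivative `(cτ + d)⁻² f (γ • τ) = g τ`, so it is another primitive
of `g`, and on the connected upper half-plane it differs from `u_g` by a constant.
-/

noncomputable section
open Matrix Complex UpperHalfPlane MeasureTheory
open scoped Manifold MatrixGroups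

abbrev SL2Z := Matrix.SpecialLinearGroup (Fin 2) ℤ

/-- The automorphy factor `cτ + d` for `γ = [[a,b],[c,d]] ∈ SL(2,ℤ)`. -/
def denomZ (γ : SL2Z) (τ : ℍ) : ℂ :=
  ((γ : Matrix (Fin 2) (Fin 2) ℤ) 1 0 : ℂ) * (τ : ℂ) + ((γ : Matrix (Fin 2) (Fin 2) ℤ) 1 1 : ℂ)

/-- The weight-2 slash action: `(f ∣[2] γ)(τ) = (cτ+d)⁻² f(γ·τ)`. -/
def slash2 (f : ℍ → ℂ) (γ : SL2Z) : ℍ → ℂ :=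
  fun τ => denomZ γ τ ^ (-2 : ℤ) * f (γ • τ)

/-- `f` is a weight-2 cusp form for the subgroup `G ≤ SL(2,ℤ)`: holomorphic,
weight-2 invariant under `G`, and `(f ∣[2] δ)(τ) → 0` as `Im τ → ∞` for all
`δ ∈ SL(2,ℤ)`. -/
def IsCusp2 (G : Subgroup SL2Z) (f : ℍ → ℂ) : Prop :=
  MDifferentiable 𝓘(ℂ) 𝓘(ℂ) f ∧
  (∀ γ ∈ G, ∀ τ : ℍ, f (γ • τ) = denomZ γ τ ^ 2 * f τ) ∧
  (∀ δ : SL2Z, Filter.Tendsto (slash2 f δ) UpperHalfPlane.atImInfty (nhds 0))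

/-- The function `t ↦ f(x + it)` (defined to be `0` for `t ≤ 0`). -/
def vertF (f : ℍ → ℂ) (x : ℝ) : ℝ → ℂ :=
  fun t => if h : 0 < t then f ⟨⟨x, t⟩, h⟩ else 0

/-- The Eichler integral `u_f(τ) = ∫_{i∞}^τ f(z) dz = −i ∫_{Im τ}^∞ f(Re τ + it) dt`. -/
def eichler (f : ℍ → ℂ) (τ : ℍ) : ℂ :=
  -Complex.I * ∫ t in Set.Ioi (UpperHalfPlane.im τ), vertF f (UpperHalfPlane.re τ) t

open Filter Set Function Asymptotics Topology

lemma slash2_one (f : ℍ → ℂ) : slash2 f 1 = f := by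
  ext τ
  simp [slash2, denomZ]

lemma denomZ_eq_denom (γ : SL2Z) (τ : ℍ) : denomZ γ τ = denom γ τ := by
  simp [denomZ, ModularGroup.denom_apply]

lemma hasDerivAt_smul_ofComplex (γ : SL2Z) (τ : ℍ) :
    HasDerivAt (fun z ↦ ((γ • ofComplex z : ℍ) : ℂ)) (denomZ γ τ ^ (-2 : ℤ)) τ := by
  have hdet : ((γ : GL (Fin 2) ℝ) : Matrix (Fin 2) (Fin 2) ℝ).det = 1 := by
    simpa only [SpecialLinearGroup.coe_GL_coe_matrix] using
      (SpecialLinearGroup.map (Int.castRingHom ℝ) γ).prop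
  have h := hasStrictDerivAt_smul (g := (γ : GL (Fin 2) ℝ)) (hdet ▸ one_pos) τ
  rw [hdet] at h
  simpa [denomZ_eq_denom, _root_.zpow_neg] using h.hasDerivAt

lemma vertF_of_pos (f : ℍ → ℂ) (x : ℝ) {t : ℝ} (ht : 0 < t) :
    vertF f x t = f (ofComplex (x + t * Complex.I)) := by
  rw [vertF, dif_pos ht, ofComplex_apply_of_im_pos (by simpa using ht)]
  congr 1
  ext
  apply Complex.ext <;> simp

lemma intervalIntegral_vertF (f : ℍ → ℂ) (x : ℝ) {y₁ y₂ : ℝ} (hy₁ : 0 < y₁) (hy₂ : 0 < y₂) :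
    ∫ t in y₁..y₂, vertF f x t = ∫ t in y₁..y₂, (f ∘ ofComplex) (x + t * Complex.I) :=
  intervalIntegral.integral_congr fun _ ht ↦ vertF_of_pos f x ((lt_min hy₁ hy₂).trans_le ht.1)

lemma tendsto_intervalIntegral_horizontal {f : ℍ → ℂ} (hf : Tendsto f atImInfty (𝓝 0))
    (x₁ x₂ : ℝ) :
    Tendsto (fun y : ℝ ↦ ∫ s in x₁..x₂, (f ∘ ofComplex) (s + y * Complex.I)) atTop (𝓝 0) := by
  rw [Metric.tendsto_nhds]
  intro ε hε
  obtain ⟨A, hA⟩ := isZeroAtImInfty_iff.mp hf (ε / (|x₂ - x₁| + 1)) (by positivity)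
  filter_upwards [eventually_ge_atTop A, eventually_gt_atTop 0] with y hyA hy
  have hbound (s : ℝ) : ‖(f ∘ ofComplex) (s + y * Complex.I)‖ ≤ ε / (|x₂ - x₁| + 1) := by
    have him : 0 < ((s : ℂ) + y * Complex.I).im := by simpa using hy
    exact hA _ (by simpa [ofComplex_apply_of_im_pos him] using hyA)
  rw [dist_zero_right]
  calc ‖∫ s in x₁..x₂, (f ∘ ofComplex) (s + y * Complex.I)‖
      ≤ ε / (|x₂ - x₁| + 1) * |x₂ - x₁| :=
        intervalIntegral.norm_integral_le_of_norm_le_const fun s _ ↦ hbound s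
    _ < ε := by
        rw [div_mul_eq_mul_div, div_lt_iff₀ (by positivity)]
        nlinarith [abs_nonneg (x₂ - x₁)]

namespace IsCusp2

variable {G : Subgroup SL2Z} {f : ℍ → ℂ}

lemma differentiableAt (hf : IsCusp2 G f) {z : ℂ} (hz : 0 < z.im) :
    DifferentiableAt ℂ (f ∘ ofComplex) z :=
  mdifferentiableAt_iff.mp (hf.1 ⟨z, hz⟩)

lemma tendsto_atImInfty (hf : IsCusp2 G f) : Tendsto f atImInfty (𝓝 0) := by
  simpa [slash2_one] using hf.2.2 1

lemma periodic_of_T_pow_mem (hf : IsCusp2 G f) {n : ℕ} (hn : ModularGroup.T ^ n ∈ G) :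
    Periodic (f ∘ ofComplex) n := by
  intro w
  rcases lt_or_ge 0 w.im with hw | hw
  · have hden : denomZ (ModularGroup.T ^ (n : ℤ)) ⟨w, hw⟩ = 1 := by
      rw [denomZ, ModularGroup.coe_T_zpow]
      simp
    have hinv := hf.2.1 _ hn ⟨w, hw⟩
    rw [← zpow_natCast, modular_T_zpow_smul, hden, one_pow, one_mul, Int.cast_natCast] at hinv
    have hshift : ofComplex (w + n) = (n : ℝ) +ᵥ (⟨w, hw⟩ : ℍ) := by
      rw [ofComplex_apply_of_im_pos (by simpa using hw)]
      ext
      simp [add_comm]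
    rw [Function.comp_apply, Function.comp_apply, hshift, ofComplex_apply_of_im_pos hw, hinv]
  · simp [ofComplex_apply_of_im_nonpos, hw]

lemma exists_isBigO_exp [G.FiniteIndex] (hf : IsCusp2 G f) :
    ∃ c > 0, f =O[atImInfty] fun τ ↦ Real.exp (-c * τ.im) := by
  obtain ⟨n, hn0, -, hn⟩ :=
    G.exists_pow_mem_of_index_ne_zero Subgroup.FiniteIndex.index_ne_zero ModularGroup.T
  have h_hol : ∀ᶠ z in comap Complex.im atTop, DifferentiableAt ℂ (f ∘ ofComplex) z :=
    eventually_of_mem (preimage_mem_comap (Ioi_mem_atTop 0)) fun _ hz ↦ hf.differentiableAt hz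
  have hO := (hf.periodic_of_T_pow_mem hn).exp_decay_of_zero_at_inf (by positivity) h_hol
    (hf.tendsto_atImInfty.comp tendsto_comap_im_ofComplex)
  refine ⟨2 * Real.pi / n, by positivity, ?_⟩
  convert hO.comp_tendsto tendsto_coe_atImInfty using 1
  · ext τ
    simp [ofComplex_apply]
  · ext τ
    simp only [Function.comp_apply, coe_im]
    ring_nf

lemma continuousOn_vertF (hf : IsCusp2 G f) (x : ℝ) : ContinuousOn (vertF f x) (Ioi 0) := by
  have hF : ContinuousOn (f ∘ ofComplex) {z : ℂ | 0 < z.im} :=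
    fun _ hz ↦ (hf.differentiableAt hz).continuousAt.continuousWithinAt
  have hline : ContinuousOn (fun t : ℝ ↦ (f ∘ ofComplex) (x + t * Complex.I)) (Ioi 0) :=
    hF.comp (by fun_prop) fun t ht ↦ by simpa using ht
  exact hline.congr fun t ht ↦ vertF_of_pos f x ht

lemma vertF_isBigO_exp [G.FiniteIndex] (hf : IsCusp2 G f) (x : ℝ) :
    ∃ c > 0, vertF f x =O[atTop] fun t ↦ Real.exp (-c * t) := by
  obtain ⟨c, hc, hO⟩ := hf.exists_isBigO_exp
  have hline : Tendsto (fun t : ℝ ↦ ofComplex (x + t * Complex.I)) atTop atImInfty :=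
    tendsto_comap_im_ofComplex.comp (tendsto_comap_iff.mpr <| tendsto_id.congr fun t ↦ by simp)
  refine ⟨c, hc, (hO.comp_tendsto hline).congr' ?_ ?_⟩ <;>
    filter_upwards [eventually_gt_atTop 0] with t ht
  · exact (vertF_of_pos f x ht).symm
  · simp [ofComplex_apply_of_im_pos (show 0 < ((x : ℂ) + t * Complex.I).im by simpa using ht)]

lemma integrableOn_vertF [G.FiniteIndex] (hf : IsCusp2 G f) (x : ℝ) {y : ℝ} (hy : 0 < y) :
    IntegrableOn (vertF f x) (Ioi y) := by
  obtain ⟨c, hc, hO⟩ := hf.vertF_isBigO_exp x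
  exact (integrableOn_Ici_iff_integrableOn_Ioi).mp <|
    (((hf.continuousOn_vertF x).mono fun t ht ↦ hy.trans_le ht).locallyIntegrableOn
      measurableSet_Ici).integrableOn_of_isBigO_atTop hO
      ⟨Ioi 0, Ioi_mem_atTop 0, exp_neg_integrableOn_Ioi 0 hc⟩

lemma integral_vertF_sub_integral_vertF [G.FiniteIndex] (hf : IsCusp2 G f) (x₁ x₂ : ℝ) {y : ℝ}
    (hy : 0 < y) :
    (∫ t in Ioi y, vertF f x₂ t) - ∫ t in Ioi y, vertF f x₁ t
      = Complex.I * ∫ s in x₁..x₂, (f ∘ ofComplex) (s + y * Complex.I) := by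
  set F := f ∘ ofComplex
  set H := ∫ s in x₁..x₂, F (s + y * Complex.I)
  set V₁ := ∫ t in Ioi y, vertF f x₁ t
  set V₂ := ∫ t in Ioi y, vertF f x₂ t
  -- Cauchy's theorem on `[x₁, x₂] × [y, Y]`, then `Y → ∞`: the top edge tends to zero.
  have hrect : ∀ᶠ Y : ℝ in atTop, H - (∫ s in x₁..x₂, F (s + Y * Complex.I))
      + Complex.I * (∫ t in y..Y, vertF f x₂ t) - Complex.I * (∫ t in y..Y, vertF f x₁ t) = 0 := by
    filter_upwards [eventually_gt_atTop y] with Y hY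
    have hdiff : DifferentiableOn ℂ F (uIcc x₁ x₂ ×ℂ uIcc y Y) := fun z hz ↦
      (hf.differentiableAt (hy.trans_le ((Complex.mem_reProdIm.mp hz).2.1.trans' (by
        simp [hY.le])))).differentiableWithinAt
    have hboundary := Complex.integral_boundary_rect_eq_zero_of_differentiableOn F
      (x₁ + y * Complex.I) (x₂ + Y * Complex.I) (by simpa using hdiff)
    simp only [add_re, ofReal_re, mul_re, Complex.I_re, mul_zero, ofReal_im, Complex.I_im, mul_one,
      sub_self, add_zero, add_im, mul_im, zero_add, smul_eq_mul] at hboundary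
    rw [intervalIntegral_vertF f x₁ hy (hy.trans hY), intervalIntegral_vertF f x₂ hy (hy.trans hY)]
    exact hboundary
  have hlim : Tendsto (fun Y : ℝ ↦ H - (∫ s in x₁..x₂, F (s + Y * Complex.I))
      + Complex.I * (∫ t in y..Y, vertF f x₂ t) - Complex.I * (∫ t in y..Y, vertF f x₁ t)) atTop
      (𝓝 (H - 0 + Complex.I * V₂ - Complex.I * V₁)) :=
    ((tendsto_const_nhds.sub (tendsto_intervalIntegral_horizontal hf.tendsto_atImInfty x₁ x₂)).add
      ((intervalIntegral_tendsto_integral_Ioi y (hf.integrableOn_vertF x₂ hy) tendsto_id).const_mul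
        _)).sub
      ((intervalIntegral_tendsto_integral_Ioi y (hf.integrableOn_vertF x₁ hy) tendsto_id).const_mul
        _)
  have hzero := tendsto_nhds_unique (hlim.congr' hrect) tendsto_const_nhds
  linear_combination (-Complex.I) * hzero + (V₂ - V₁) * Complex.I_sq

lemma eichler_sub_eichler_eq_wedgeIntegral [G.FiniteIndex] (hf : IsCusp2 G f) (τ₀ τ : ℍ) :
    eichler f τ - eichler f τ₀ = wedgeIntegral τ₀ τ (f ∘ ofComplex) := by
  have hvert := intervalIntegral.integral_Ioi_sub_Ioi' (hf.integrableOn_vertF τ.re τ₀.im_pos)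
    (hf.integrableOn_vertF τ.re τ.im_pos)
  rw [intervalIntegral_vertF f τ.re τ₀.im_pos τ.im_pos] at hvert
  have hhoriz := hf.integral_vertF_sub_integral_vertF τ₀.re τ.re τ₀.im_pos
  simp only [eichler, wedgeIntegral, coe_re, coe_im, smul_eq_mul]
  linear_combination Complex.I * hvert - Complex.I * hhoriz
    - (∫ s in τ₀.re..τ.re, (f ∘ ofComplex) (s + τ₀.im * Complex.I)) * Complex.I_sq

lemma hasDerivAt_eichler_comp_ofComplex [G.FiniteIndex] (hf : IsCusp2 G f) (τ : ℍ) :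
    HasDerivAt (eichler f ∘ ofComplex) (f τ) τ := by
  have hball : Metric.ball (τ : ℂ) τ.im ⊆ {z : ℂ | 0 < z.im} := fun z hz ↦ by
    have := (abs_im_le_norm (z - τ)).trans_lt (mem_ball_iff_norm.mp hz)
    simp only [sub_im, coe_im] at this
    show 0 < z.im
    linarith [abs_lt.mp this]
  have hF : DifferentiableOn ℂ (f ∘ ofComplex) (Metric.ball (τ : ℂ) τ.im) := fun z hz ↦
    (hf.differentiableAt (hball hz)).differentiableWithinAt
  have hwedge := hF.isConservativeOn.hasDerivAt_wedgeIntegral hF.continuousOn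
    (Metric.mem_ball_self τ.im_pos)
  rw [Function.comp_apply, ofComplex_apply] at hwedge
  refine (hwedge.const_add (eichler f τ)).congr_of_eventuallyEq ?_
  filter_upwards [isOpen_upperHalfPlaneSet.mem_nhds τ.im_pos] with z hz
  rw [Function.comp_apply, ofComplex_apply_of_im_pos hz]
  exact eq_add_of_sub_eq' (hf.eichler_sub_eichler_eq_wedgeIntegral τ ⟨z, hz⟩)

lemma hasDerivAt_eichler_smul [G.FiniteIndex] (hf : IsCusp2 G f) (γ : SL2Z) (τ : ℍ) :
    HasDerivAt (fun z ↦ eichler f (γ • ofComplex z)) (slash2 f γ τ) τ := by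
  have h := (hf.hasDerivAt_eichler_comp_ofComplex (γ • τ)).comp_of_eq (τ : ℂ)
    (hasDerivAt_smul_ofComplex γ τ) (by rw [ofComplex_apply])
  simpa [Function.comp_def, ofComplex_apply, slash2, mul_comm] using h

end IsCusp2

theorem stmt_17_general (G : Subgroup SL2Z) [G.FiniteIndex]
    (f g : ℍ → ℂ) (γ : SL2Z)
    (hf : IsCusp2 G f) (hg : IsCusp2 G g)
    (hfg : ∀ τ : ℍ, g τ = slash2 f γ τ) :
    (∀ τ : ℍ, IntegrableOn (vertF f (UpperHalfPlane.re τ)) (Set.Ioi (UpperHalfPlane.im τ))) ∧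
    (∀ τ : ℍ, IntegrableOn (vertF g (UpperHalfPlane.re τ)) (Set.Ioi (UpperHalfPlane.im τ))) ∧
    ∃ c : ℂ, ∀ τ : ℍ, eichler f (γ • τ) = eichler g τ + c := by
  refine ⟨fun τ ↦ hf.integrableOn_vertF _ τ.im_pos, fun τ ↦ hg.integrableOn_vertF _ τ.im_pos, ?_⟩
  have hderiv_f (z : ℂ) (hz : 0 < z.im) :
      HasDerivAt (fun z ↦ eichler f (γ • ofComplex z)) (g ⟨z, hz⟩) z :=
    hfg ⟨z, hz⟩ ▸ hf.hasDerivAt_eichler_smul γ ⟨z, hz⟩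
  have hderiv_g (z : ℂ) (hz : 0 < z.im) : HasDerivAt (eichler g ∘ ofComplex) (g ⟨z, hz⟩) z :=
    hg.hasDerivAt_eichler_comp_ofComplex ⟨z, hz⟩
  obtain ⟨c, hc⟩ := isOpen_upperHalfPlaneSet.exists_eq_add_of_deriv_eq
    (convex_halfSpace_im_gt 0).isPreconnected
    (fun z hz ↦ (hderiv_f z hz).differentiableAt.differentiableWithinAt)
    (fun z hz ↦ (hderiv_g z hz).differentiableAt.differentiableWithinAt)
    fun z hz ↦ (hderiv_f z hz).deriv.trans (hderiv_g z hz).deriv.symm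
  exact ⟨c, fun τ ↦ by simpa [ofComplex_apply] using hc τ.im_pos⟩

/-- for a weight-2 cusp form `f` on a finite-index normal subgroup `G` of
`SL(2,ℤ)`, `γ ∈ SL(2,ℤ)` and `g = f ∣[2] γ` (also a cusp form for `G`), the improper
integrals defining the Eichler integrals `u_f` and `u_g` converge absolutely, and there
is a constant `c` with `u_f(γ·τ) = u_g(τ) + c` for all `τ ∈ ℍ`. -/
theorem stmt_17 (G : Subgroup SL2Z) [G.Normal] [G.FiniteIndex]
    (f g : ℍ → ℂ) (γ : SL2Z)
    (hf : IsCusp2 G f) (hg : IsCusp2 G g)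
    (hfg : ∀ τ : ℍ, g τ = slash2 f γ τ) :
    (∀ τ : ℍ, IntegrableOn (vertF f (UpperHalfPlane.re τ)) (Set.Ioi (UpperHalfPlane.im τ))) ∧
    (∀ τ : ℍ, IntegrableOn (vertF g (UpperHalfPlane.re τ)) (Set.Ioi (UpperHalfPlane.im τ))) ∧
    ∃ c : ℂ, ∀ τ : ℍ, eichler f (γ • τ) = eichler g τ + c :=
  stmt_17_general G f g γ hf hg hfg
end
end
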